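/- arXiv:2404.11837 — 5 statements merged into one kernel-verified Lean document; each statement's English description precedes it below -/
import Mathlib

section
/- Let d ≥ 1 and N ≥ 1, let Δ_d be a finite collection of d-element subsets of {1,…,N}, and let v_1,…,v_N ∈ ℝ^d be such that for each σ ∈ Δ_d the set {v_k : k ∈ σ} is a basis of ℝ^d. Suppose (f_σ)_{σ∈Δ_d} is a family of polynomials f_σ ∈ ℝ[t_1,…,t_d] such that whenever two members σ, σ′ ∈ Δ_d contain a common (d−1)-element subset τ, the difference f_σ − f_σ′ vanishes identically on the hyperplane spanned by {v_k : k ∈ τ}. If the weight w = (w_σ)_{σ∈Δ_d}, w_σ ∈ ℝ, is balanced, then the rational function Σ_{σ∈Δ_d} w_σ · f_σ/χ_σ, viewed as an element of the fraction field of ℝ[t_1,…,t_d], is a polynomial. -/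
open MvPolynomial

/-- The dual-basis linear functional `λ_{σ,i}` (with coefficient vector `L σ i`),
regarded as a homogeneous linear polynomial in `ℝ[t_1,…,t_d]`. -/
noncomputable def lamPoly (d N : ℕ) (L : Finset (Fin N) → Fin N → Fin d → ℝ)
    (σ : Finset (Fin N)) (i : Fin N) : MvPolynomial (Fin d) ℝ :=
  ∑ j, C (L σ i j) * X j

/-- `χ_σ = ∏_{i∈σ} λ_{σ,i}`. -/
noncomputable def chiPoly (d N : ℕ) (L : Finset (Fin N) → Fin N → Fin d → ℝ)
    (σ : Finset (Fin N)) : MvPolynomial (Fin d) ℝ :=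
  ∏ i ∈ σ, lamPoly d N L σ i

/-!
Clearing denominators, the claim is that `Q = ∏_σ χ_σ` divides
`P = ∑_σ w_σ f_σ ∏_{σ' ≠ σ} χ_{σ'}`. The factors of `Q` are nonzero linear forms, which are prime,
so it suffices that for every nonzero `a` the power of `ℓ = a ⬝ᵥ t` dividing `Q` also divides `P`.
The `σ` with `ℓ ∣ χ_σ` are those with exactly `d - 1` vertices on the hyperplane `H = {a ⬝ᵥ x = 0}`;
all other terms of `P` contain the full power of `ℓ`, and for the remaining ones it is enough that
one more factor `ℓ` divides a "residue" polynomial, i.e. that the residue vanishes on `H`.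
Grouping the `σ` by their facet `τ` on `H`, compatibility makes `f_σ` and the other linear factors
of `χ_σ` agree on `H = span τ` within a group, and the leftover scalars add up to `a` applied to the
balancing vector of `τ`, which lies in `span τ ⊆ H`; so each group contributes zero.
-/

open Finset

theorem Finset.prod_erase_eq_prod_erase_of_eq {ι M : Type*} [CommMonoid M] [DecidableEq ι]
    {s : Finset ι} {f : ι → M} {a b : ι} (ha : a ∈ s) (hb : b ∈ s) (h : f a = f b) :
    ∏ x ∈ s.erase a, f x = ∏ x ∈ s.erase b, f x := by
  obtain rfl | hab := eq_or_ne a b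
  · rfl
  rw [← mul_prod_erase (s.erase a) f (mem_erase.2 ⟨Ne.symm hab, hb⟩),
    ← mul_prod_erase (s.erase b) f (mem_erase.2 ⟨hab, ha⟩), erase_right_comm, h]

theorem Finset.sum_div_eq_sum_mul_prod_erase_div_prod {α F : Type*} [Field F] [DecidableEq α]
    {s : Finset α} {g χ : α → F} (hχ : ∀ σ ∈ s, χ σ ≠ 0) :
    ∑ σ ∈ s, g σ / χ σ = (∑ σ ∈ s, g σ * ∏ σ' ∈ s.erase σ, χ σ') / ∏ σ ∈ s, χ σ := by
  rw [eq_div_iff (prod_ne_zero_iff.2 hχ), sum_mul]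
  refine sum_congr rfl fun σ hσ => ?_
  rw [← mul_prod_erase s χ hσ]
  field_simp [hχ σ hσ]

theorem Finset.prod_dvd_of_forall_pow_card_dvd {ι M : Type*} [CommMonoidWithZero M]
    [IsCancelMulZero M] [∀ x y : M, Decidable (Associated x y)] {E : Finset ι} {p : ι → M}
    {n : M} (hp : ∀ e ∈ E, Prime (p e))
    (h : ∀ e ∈ E, p e ^ #{e' ∈ E | Associated (p e') (p e)} ∣ n) :
    ∏ e ∈ E, p e ∣ n := by
  suffices ∀ E' ⊆ E, ∏ e ∈ E', p e ∣ n from this E Subset.rfl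
  intro E'
  induction E' using Finset.strongInduction with
  | H E' ih =>
    intro hE'
    obtain rfl | ⟨e₀, he₀⟩ := E'.eq_empty_or_nonempty
    · simp
    have hp₀ := hp e₀ (hE' he₀)
    obtain ⟨m, hm⟩ := ih {e ∈ E' | ¬Associated (p e) (p e₀)}
      (filter_ssubset.2 ⟨e₀, he₀, not_not.2 (Associated.refl _)⟩) ((filter_subset _ _).trans hE')
    have hndvd : ¬p e₀ ∣ ∏ e ∈ E' with ¬Associated (p e) (p e₀), p e := by
      rw [hp₀.dvd_finsetProd_iff]
      rintro ⟨e, he, hdvd⟩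
      exact (mem_filter.1 he).2 (hp₀.associated_of_dvd (hp e (hE' (mem_filter.1 he).1)) hdvd).symm
    have hcls : ∏ e ∈ E' with Associated (p e) (p e₀), p e ∣ m := by
      have hpow : p e₀ ^ #{e ∈ E' | Associated (p e) (p e₀)} ∣ n :=
        (pow_dvd_pow _ (card_le_card (filter_subset_filter _ hE'))).trans (h e₀ (hE' he₀))
      rw [hm] at hpow
      refine (Associated.dvd_iff_dvd_left ?_).2 (hp₀.pow_dvd_of_dvd_mul_left _ hndvd hpow)
      exact (Associated.prod _ _ _ fun e he => (mem_filter.1 he).2).trans (by rw [prod_const]; rfl)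
    rw [← prod_filter_not_mul_prod_filter E' fun e => Associated (p e) (p e₀), hm]
    exact mul_dvd_mul_left _ hcls

theorem Finset.pow_card_dvd_prod_mul_sum_mul_prod_erase {α R : Type*} [CommSemiring R]
    [DecidableEq α] {Δ S : Finset α} (hS : S ⊆ Δ) {ℓ : R} {r χ ρ g : α → R}
    (hχ : ∀ σ ∈ S, r σ * χ σ = ℓ * ρ σ)
    (hres : ℓ ∣ ∑ σ ∈ S, g σ * r σ * ∏ σ' ∈ S.erase σ, ρ σ') :
    ℓ ^ #S ∣ (∏ σ ∈ S, r σ) * ∑ σ ∈ Δ, g σ * ∏ σ' ∈ Δ.erase σ, χ σ' := by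
  have hprod : ∀ T ⊆ S, (∏ σ ∈ T, r σ) * ∏ σ ∈ T, χ σ = ℓ ^ #T * ∏ σ ∈ T, ρ σ := fun T hT => by
    rw [← prod_mul_distrib, prod_congr rfl fun σ hσ => hχ σ (hT hσ), prod_mul_distrib,
      prod_const]
  rw [mul_sum, ← sum_sdiff hS]
  refine dvd_add (dvd_sum fun σ hσ => ?_) ?_
  · have hSσ : S ⊆ Δ.erase σ := fun σ' h' =>
      mem_erase.2 ⟨fun h => (mem_sdiff.1 hσ).2 (h ▸ h'), hS h'⟩
    rw [← prod_sdiff hSσ, show ∀ x y z w : R, x * (y * (z * w)) = (x * w) * (y * z) by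
      intros; ring, hprod S Subset.rfl, mul_assoc]
    exact dvd_mul_right _ _
  obtain rfl | ⟨σ₀, hσ₀⟩ := S.eq_empty_or_nonempty
  · simp
  have hterm : ∀ σ ∈ S, (∏ σ' ∈ S, r σ') * (g σ * ∏ σ' ∈ Δ.erase σ, χ σ') =
      ℓ ^ (#S - 1) * ((∏ σ' ∈ Δ \ S, χ σ') * (g σ * r σ * ∏ σ' ∈ S.erase σ, ρ σ')) := by
    intro σ hσ
    have hsdiff : Δ.erase σ \ S.erase σ = Δ \ S := by
      rw [← erase_sdiff_distrib, erase_eq_of_notMem fun h => (mem_sdiff.1 h).2 hσ]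
    have hrest := hprod _ (erase_subset σ S)
    rw [card_erase_of_mem hσ] at hrest
    rw [← mul_prod_erase S r hσ, ← prod_sdiff (erase_subset_erase σ hS), hsdiff]
    calc _ = r σ * g σ * (∏ σ' ∈ Δ \ S, χ σ') *
          ((∏ σ' ∈ S.erase σ, r σ') * ∏ σ' ∈ S.erase σ, χ σ') := by ring
      _ = _ := by rw [hrest]; ring
  rw [sum_congr rfl hterm, ← mul_sum, ← mul_sum, ← pow_sub_one_mul (card_ne_zero_of_mem hσ₀)]
  exact mul_dvd_mul_left _ (hres.mul_left _)

namespace MvPolynomial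

theorem dvd_sub_aeval_of_forall_dvd {ι R : Type*} [CommRing R] {ℓ : MvPolynomial ι R}
    {s : ι → MvPolynomial ι R} (h : ∀ j, ℓ ∣ X j - s j) (p : MvPolynomial ι R) :
    ℓ ∣ p - aeval s p := by
  have hcomp : (Ideal.Quotient.mkₐ R (Ideal.span {ℓ})).comp (aeval s) =
      Ideal.Quotient.mkₐ R (Ideal.span {ℓ}) :=
    algHom_ext fun j => by
      simpa [Ideal.Quotient.eq, Ideal.mem_span_singleton] using (h j).neg_right
  simpa [Ideal.Quotient.eq, Ideal.mem_span_singleton] using congr($hcomp p).symm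

variable {ι K : Type*} [Fintype ι] [Field K]

noncomputable def linearForm : (ι → K) →ₗ[K] MvPolynomial ι K where
  toFun a := ∑ j, C (a j) * X j
  map_add' a b := by simp only [Pi.add_apply, map_add, add_mul, Finset.sum_add_distrib]
  map_smul' c a := by
    simp only [Pi.smul_apply, smul_eq_mul, map_mul, RingHom.id_apply, Finset.smul_sum,
      smul_eq_C_mul, mul_assoc]

theorem linearForm_apply (a : ι → K) : linearForm a = ∑ j, C (a j) * X j := rfl

@[simp]
theorem eval_linearForm (a x : ι → K) : eval x (linearForm a) = a ⬝ᵥ x := by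
  simp [linearForm_apply, dotProduct]

theorem linearForm_injective [DecidableEq ι] :
    Function.Injective (linearForm (ι := ι) (K := K)) := by
  intro a b h
  funext j
  simpa using congr(eval (Pi.single j 1) $h)

theorem linearForm_smul (c : K) (a : ι → K) : linearForm (c • a) = C c * linearForm a := by
  rw [map_smul, smul_eq_C_mul]

variable (a e : ι → K)

/-- Pullback along `x ↦ x - (a ⬝ᵥ x) • e`, a projection onto the hyperplane `a ⬝ᵥ x = 0` when
`a ⬝ᵥ e = 1`. -/
noncomputable def projAlong : MvPolynomial ι K →ₐ[K] MvPolynomial ι K :=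
  aeval fun j => X j - C (e j) * linearForm a

theorem projAlong_linearForm (b : ι → K) :
    projAlong a e (linearForm b) = linearForm (b - (b ⬝ᵥ e) • a) := by
  have : projAlong a e (linearForm b) = linearForm b - C (b ⬝ᵥ e) * linearForm a := by
    rw [projAlong, linearForm_apply b]
    simp [mul_sub, Finset.sum_sub_distrib, ← mul_assoc, ← Finset.sum_mul, dotProduct]
  rw [this, map_sub, linearForm_smul]

theorem eval_projAlong (x : ι → K) (p : MvPolynomial ι K) :
    eval x (projAlong a e p) = eval (x - (a ⬝ᵥ x) • e) p := by
  rw [projAlong, aeval_eq_bind₁]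
  refine (eval₂Hom_bind₁ (RingHom.id K) x _ p).trans ?_
  change eval (fun j => eval x (X j - C (e j) * linearForm a)) p = _
  congr 2
  funext j
  simp [mul_comm]

theorem linearForm_dvd_sub_projAlong (p : MvPolynomial ι K) :
    linearForm a ∣ p - projAlong a e p :=
  dvd_sub_aeval_of_forall_dvd (fun j => ⟨C (e j), by ring⟩) p

variable {a e}

theorem linearForm_dvd_iff (hae : a ⬝ᵥ e = 1) {p : MvPolynomial ι K} :
    linearForm a ∣ p ↔ projAlong a e p = 0 := by
  refine ⟨fun ⟨q, hq⟩ => ?_, fun h => by simpa [h] using linearForm_dvd_sub_projAlong a e p⟩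
  rw [hq, map_mul, projAlong_linearForm, hae, one_smul, sub_self, map_zero, zero_mul]

theorem exists_dotProduct_eq_one [DecidableEq ι] (ha : a ≠ 0) : ∃ e, a ⬝ᵥ e = 1 := by
  obtain ⟨j, hj⟩ := Function.ne_iff.1 ha
  exact ⟨Pi.single j (a j)⁻¹, by simpa [dotProduct_single] using mul_inv_cancel₀ hj⟩

theorem prime_linearForm [DecidableEq ι] (ha : a ≠ 0) : Prime (linearForm a) := by
  obtain ⟨e, hae⟩ := exists_dotProduct_eq_one ha
  refine ⟨fun h => ha (linearForm_injective (h.trans (map_zero _).symm)), fun hu => ?_,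
    fun p q h => ?_⟩
  · simpa using (linearForm_dvd_iff hae (p := 1)).1 hu.dvd
  · simpa only [linearForm_dvd_iff hae, map_mul, mul_eq_zero] using h

theorem exists_eq_smul_of_associated [DecidableEq ι] (ha : a ≠ 0) {b : ι → K}
    (h : Associated (linearForm b) (linearForm a)) : ∃ c : K, b = c • a := by
  obtain ⟨e, hae⟩ := exists_dotProduct_eq_one ha
  have := (linearForm_dvd_iff hae).1 h.symm.dvd
  rw [projAlong_linearForm, ← map_zero linearForm] at this
  exact ⟨b ⬝ᵥ e, sub_eq_zero.1 (linearForm_injective this)⟩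

theorem linearForm_dvd_of_forall_eval_eq_zero [DecidableEq ι] [Infinite K] (ha : a ≠ 0)
    {p : MvPolynomial ι K} (h : ∀ x, a ⬝ᵥ x = 0 → eval x p = 0) : linearForm a ∣ p := by
  obtain ⟨e, hae⟩ := exists_dotProduct_eq_one ha
  rw [linearForm_dvd_iff hae]
  refine MvPolynomial.funext fun x => ?_
  rw [eval_projAlong, map_zero]
  exact h _ (by rw [dotProduct_sub, dotProduct_smul, hae, smul_eq_mul, mul_one, sub_self])

end MvPolynomial

section DualBasis

variable {ι κ K : Type*} [Fintype ι] [Field K] {v l : κ → ι → K} {σ : Finset κ}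

def IsDualOn [DecidableEq κ] (l v : κ → ι → K) (σ : Finset κ) : Prop :=
  ∀ i ∈ σ, ∀ k ∈ σ, l i ⬝ᵥ v k = if i = k then 1 else 0

theorem dotProduct_eq_of_mem_span {τ : Set κ} {b b' x : ι → K}
    (h : ∀ k ∈ τ, b ⬝ᵥ v k = b' ⬝ᵥ v k) (hx : x ∈ Submodule.span K (v '' τ)) :
    b ⬝ᵥ x = b' ⬝ᵥ x :=
  LinearMap.eqOn_span (f := dotProductBilin K K b) (g := dotProductBilin K K b')
    (by rintro _ ⟨k, hk, rfl⟩; exact h k hk) hx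

variable [DecidableEq κ]

theorem IsDualOn.ne_zero (hdual : IsDualOn l v σ) {i : κ} (hi : i ∈ σ) : l i ≠ 0 := fun h => by
  simpa [h] using hdual i hi i hi

theorem sum_dotProduct_smul_eq (hspan : Submodule.span K (v '' σ) = ⊤) (hdual : IsDualOn l v σ)
    (x : ι → K) : ∑ k ∈ σ, (l k ⬝ᵥ x) • v k = x := by
  have : ∑ k ∈ σ, (dotProductBilin K K (l k)).smulRight (v k) = LinearMap.id := by
    refine LinearMap.ext_on hspan ?_
    rintro _ ⟨i, hi : i ∈ σ, rfl⟩
    simp [hi, sum_congr rfl fun k hk => congrArg (· • v k) (hdual k hk i hi), ite_smul]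
  simpa using congr($this x)

theorem eq_sum_dotProduct_smul [DecidableEq ι] (hspan : Submodule.span K (v '' σ) = ⊤)
    (hdual : IsDualOn l v σ) (a : ι → K) : a = ∑ k ∈ σ, (a ⬝ᵥ v k) • l k := by
  funext j
  simpa [dotProduct_sum, dotProduct_smul, dotProduct_single, Finset.sum_apply, mul_comm] using
    congrArg (a ⬝ᵥ ·) (sum_dotProduct_smul_eq hspan hdual (Pi.single j 1)).symm

theorem mem_span_of_forall_dotProduct_eq_zero (hspan : Submodule.span K (v '' σ) = ⊤)
    (hdual : IsDualOn l v σ) {τ : Finset κ} (hτ : τ ⊆ σ) {x : ι → K}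
    (hx : ∀ k ∈ σ \ τ, l k ⬝ᵥ x = 0) : x ∈ Submodule.span K (v '' τ) := by
  rw [← sum_dotProduct_smul_eq hspan hdual x, ← sum_sdiff hτ,
    sum_eq_zero fun k hk => by rw [hx k hk, zero_smul], zero_add]
  exact Submodule.sum_mem _ fun k hk => Submodule.smul_mem _ _ (Submodule.subset_span ⟨k, hk, rfl⟩)

end DualBasis

section Faces

variable {ι κ K : Type*} [Fintype ι] [Field K] [DecidableEq K] {v l : κ → ι → K}
  {σ : Finset κ} {a : ι → K}

def faceOn (a : ι → K) (v : κ → ι → K) (σ : Finset κ) : Finset κ := {k ∈ σ | a ⬝ᵥ v k = 0}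

theorem faceOn_subset : faceOn a v σ ⊆ σ := filter_subset _ _

variable [DecidableEq κ]

theorem exists_sdiff_faceOn_eq_singleton (hface : #(faceOn a v σ) + 1 = #σ) :
    ∃ i, σ \ faceOn a v σ = {i} :=
  card_eq_one.1 (by rw [card_sdiff_of_subset faceOn_subset]; omega)

theorem dotProduct_ne_zero_of_sdiff_faceOn_eq {i : κ} (hi : σ \ faceOn a v σ = {i}) :
    a ⬝ᵥ v i ≠ 0 := by
  have hmem : i ∈ σ \ faceOn a v σ := hi ▸ mem_singleton_self i
  rw [mem_sdiff, faceOn, mem_filter] at hmem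
  exact fun h => hmem.2 ⟨hmem.1, h⟩

theorem faceOn_eq_erase_of_eq_smul (hdual : IsDualOn l v σ) {i : κ} (hi : i ∈ σ) {c : K}
    (h : l i = c • a) : faceOn a v σ = σ.erase i := by
  have hc : ∀ k ∈ σ, c * (a ⬝ᵥ v k) = if i = k then 1 else 0 := fun k hk => by
    rw [← smul_eq_mul, ← smul_dotProduct, ← h, hdual i hi k hk]
  have hc0 : c ≠ 0 := left_ne_zero_of_mul_eq_one (by simpa using hc i hi)
  ext k
  simp only [faceOn, mem_filter, mem_erase]
  constructor
  · rintro ⟨hk, h0⟩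
    refine ⟨fun hki => ?_, hk⟩
    subst hki
    simpa [h0] using hc k hk
  · rintro ⟨hki, hk⟩
    exact ⟨hk, by simpa [hc0, Ne.symm hki] using hc k hk⟩

variable [DecidableEq ι]

theorem eq_smul_of_sdiff_faceOn_eq (hspan : Submodule.span K (v '' σ) = ⊤)
    (hdual : IsDualOn l v σ) {i : κ} (hi : σ \ faceOn a v σ = {i}) :
    a = (a ⬝ᵥ v i) • l i := by
  refine (eq_sum_dotProduct_smul hspan hdual a).trans ?_
  rw [← sum_sdiff (faceOn_subset : faceOn a v σ ⊆ σ), hi, sum_singleton,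
    sum_eq_zero fun k hk => by rw [(mem_filter.1 hk).2, zero_smul], add_zero]

theorem faceOn_ssubset (hspan : Submodule.span K (v '' σ) = ⊤) (hdual : IsDualOn l v σ)
    (ha : a ≠ 0) : faceOn a v σ ⊂ σ := by
  refine faceOn_subset.ssubset_of_ne fun h => ha ?_
  refine (eq_sum_dotProduct_smul hspan hdual a).trans (sum_eq_zero fun k hk => ?_)
  rw [(mem_filter.1 (h.symm ▸ hk : k ∈ faceOn a v σ)).2, zero_smul]

theorem faceOn_eq_of_faceOn_subset {σ' : Finset κ} {l' : κ → ι → K}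
    (hspan : Submodule.span K (v '' σ') = ⊤) (hdual : IsDualOn l' v σ') (ha : a ≠ 0)
    (hface : #(faceOn a v σ) + 1 = #σ') (hsub : faceOn a v σ ⊆ σ') :
    faceOn a v σ' = faceOn a v σ := by
  have hle : faceOn a v σ ⊆ faceOn a v σ' := fun k hk =>
    mem_filter.2 ⟨hsub hk, (mem_filter.1 hk).2⟩
  have hlt := card_lt_card (faceOn_ssubset hspan hdual ha)
  exact (eq_of_subset_of_card_le hle (by omega)).symm

theorem mem_span_faceOn (hspan : Submodule.span K (v '' σ) = ⊤) (hdual : IsDualOn l v σ)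
    (hface : #(faceOn a v σ) + 1 = #σ) {x : ι → K} (hx : a ⬝ᵥ x = 0) :
    x ∈ Submodule.span K (v '' faceOn a v σ) := by
  obtain ⟨i, hi⟩ := exists_sdiff_faceOn_eq_singleton hface
  refine mem_span_of_forall_dotProduct_eq_zero hspan hdual faceOn_subset fun k hk => ?_
  rw [hi, mem_singleton] at hk
  subst hk
  rw [eq_smul_of_sdiff_faceOn_eq hspan hdual hi, smul_dotProduct, smul_eq_mul] at hx
  exact (mul_eq_zero.1 hx).resolve_left (dotProduct_ne_zero_of_sdiff_faceOn_eq hi)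

-- The scalar is written as a sum over the singleton `σ \ faceOn a v σ` to match the balancing
-- condition.
theorem C_mul_prod_linearForm_eq (hspan : Submodule.span K (v '' σ) = ⊤)
    (hdual : IsDualOn l v σ) (hface : #(faceOn a v σ) + 1 = #σ) :
    C (a ⬝ᵥ ∑ k ∈ σ \ faceOn a v σ, v k) * ∏ i ∈ σ, linearForm (l i) =
      linearForm a * ∏ i ∈ faceOn a v σ, linearForm (l i) := by
  obtain ⟨i, hi⟩ := exists_sdiff_faceOn_eq_singleton hface
  rw [← prod_sdiff (faceOn_subset : faceOn a v σ ⊆ σ), hi, sum_singleton, prod_singleton,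
    ← mul_assoc, ← linearForm_smul, ← eq_smul_of_sdiff_faceOn_eq hspan hdual hi]

end Faces

section Residues

variable {d N : ℕ} {Δd : Finset (Finset (Fin N))} {v : Fin N → Fin d → ℝ}
  {L : Finset (Fin N) → Fin N → Fin d → ℝ} {f : Finset (Fin N) → MvPolynomial (Fin d) ℝ}
  {w : Finset (Fin N) → ℝ} {a : Fin d → ℝ}

def IsCompatible (Δd : Finset (Finset (Fin N))) (v : Fin N → Fin d → ℝ)
    (f : Finset (Fin N) → MvPolynomial (Fin d) ℝ) : Prop :=
  ∀ σ ∈ Δd, ∀ σ' ∈ Δd, ∀ τ : Finset (Fin N), τ.card + 1 = d →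
    τ ⊆ σ → τ ⊆ σ' → ∀ x : Fin d → ℝ, x ∈ Submodule.span ℝ (v '' ↑τ) → eval x (f σ - f σ') = 0

def IsBalanced (Δd : Finset (Finset (Fin N))) (v : Fin N → Fin d → ℝ)
    (w : Finset (Fin N) → ℝ) : Prop :=
  ∀ τ : Finset (Fin N), τ.card + 1 = d → (∃ σ ∈ Δd, τ ⊆ σ) →
    (∑ σ ∈ Δd.filter (fun σ => τ ⊆ σ), w σ • ∑ k ∈ σ \ τ, v k) ∈ Submodule.span ℝ (v '' ↑τ)

theorem filter_faceOn_eq_filter_subset (hcard : ∀ σ ∈ Δd, σ.card = d)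
    (hspan : ∀ σ ∈ Δd, Submodule.span ℝ (v '' ↑σ) = ⊤) (hdual : ∀ σ ∈ Δd, IsDualOn (L σ) v σ)
    (ha : a ≠ 0) {σT : Finset (Fin N)} (hσT : #(faceOn a v σT) + 1 = d) :
    {σ ∈ Δd | #(faceOn a v σ) + 1 = d ∧ faceOn a v σ = faceOn a v σT} =
      {σ ∈ Δd | faceOn a v σT ⊆ σ} := by
  ext σ
  simp only [mem_filter, and_congr_right_iff]
  intro hσ
  refine ⟨fun h => h.2 ▸ faceOn_subset, fun hsub => ?_⟩
  have := faceOn_eq_of_faceOn_subset (hspan σ hσ) (hdual σ hσ) ha (by rw [hcard σ hσ, hσT]) hsub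
  exact ⟨this ▸ hσT, this⟩

theorem linearForm_dvd_sum_residue (hcard : ∀ σ ∈ Δd, σ.card = d)
    (hspan : ∀ σ ∈ Δd, Submodule.span ℝ (v '' ↑σ) = ⊤) (hdual : ∀ σ ∈ Δd, IsDualOn (L σ) v σ)
    (hcompat : IsCompatible Δd v f) (hbal : IsBalanced Δd v w) (ha : a ≠ 0) :
    linearForm a ∣ ∑ σ ∈ Δd with #(faceOn a v σ) + 1 = d,
      C (w σ) * f σ * C (a ⬝ᵥ ∑ k ∈ σ \ faceOn a v σ, v k) *
        ∏ σ' ∈ {σ ∈ Δd | #(faceOn a v σ) + 1 = d}.erase σ,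
          ∏ i ∈ faceOn a v σ', linearForm (L σ' i) := by
  set S := {σ ∈ Δd | #(faceOn a v σ) + 1 = d}
  set ρ := fun σ => ∏ i ∈ faceOn a v σ, linearForm (L σ i)
  refine linearForm_dvd_of_forall_eval_eq_zero ha fun x hx => ?_
  rw [map_sum, ← sum_fiberwise_of_maps_to fun σ hσ => mem_image_of_mem (faceOn a v) hσ]
  refine sum_eq_zero fun τ hτ => ?_
  obtain ⟨σT, hσT, rfl⟩ := mem_image.1 hτ
  obtain ⟨hσTΔ, hσTface⟩ := mem_filter.1 hσT
  have hxτ : x ∈ Submodule.span ℝ (v '' faceOn a v σT) :=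
    mem_span_faceOn (hspan σT hσTΔ) (hdual σT hσTΔ) (by rw [hcard σT hσTΔ, hσTface]) hx
  rw [filter_filter, filter_faceOn_eq_filter_subset hcard hspan hdual ha hσTface]
  have hterm : ∀ σ ∈ {σ ∈ Δd | faceOn a v σT ⊆ σ},
      eval x (C (w σ) * f σ * C (a ⬝ᵥ ∑ k ∈ σ \ faceOn a v σ, v k) * ∏ σ' ∈ S.erase σ, ρ σ') =
        w σ * (a ⬝ᵥ ∑ k ∈ σ \ faceOn a v σT, v k) *
          (eval x (f σT) * eval x (∏ σ' ∈ S.erase σT, ρ σ')) := by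
    intro σ hσ
    obtain ⟨hσΔ, hsub⟩ := mem_filter.1 hσ
    rw [← filter_faceOn_eq_filter_subset hcard hspan hdual ha hσTface, ← filter_filter] at hσ
    obtain ⟨hσS, hface⟩ := mem_filter.1 hσ
    have hf : eval x (f σ) = eval x (f σT) := sub_eq_zero.1 <| by
      simpa using hcompat σ hσΔ σT hσTΔ _ hσTface hsub faceOn_subset x hxτ
    have hρ : eval x (ρ σ) = eval x (ρ σT) := by
      simp only [ρ, hface, map_prod, eval_linearForm]
      refine prod_congr rfl fun i hi => dotProduct_eq_of_mem_span (fun k hk => ?_) hxτ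
      rw [hdual σ hσΔ i (hsub hi) k (hsub hk),
        hdual σT hσTΔ i (faceOn_subset hi) k (faceOn_subset hk)]
    rw [map_mul, map_mul, map_mul, eval_C, eval_C, hf, hface, map_prod, map_prod,
      prod_erase_eq_prod_erase_of_eq (f := fun σ' => eval x (ρ σ')) hσS hσT hρ]
    ring
  have hbalance : ∑ σ ∈ Δd with faceOn a v σT ⊆ σ,
      w σ * (a ⬝ᵥ ∑ k ∈ σ \ faceOn a v σT, v k) = 0 := by
    have := dotProduct_eq_of_mem_span (b := a) (b' := 0)
      (fun k hk => by rw [(mem_filter.1 hk).2, zero_dotProduct])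
      (hbal _ hσTface ⟨σT, hσTΔ, faceOn_subset⟩)
    simpa [dotProduct_sum, dotProduct_smul] using this
  rw [sum_congr rfl hterm, ← sum_mul, hbalance, zero_mul]

theorem linearForm_pow_card_dvd (hcard : ∀ σ ∈ Δd, σ.card = d)
    (hspan : ∀ σ ∈ Δd, Submodule.span ℝ (v '' ↑σ) = ⊤) (hdual : ∀ σ ∈ Δd, IsDualOn (L σ) v σ)
    (hcompat : IsCompatible Δd v f) (hbal : IsBalanced Δd v w) (ha : a ≠ 0) :
    linearForm a ^ #{σ ∈ Δd | #(faceOn a v σ) + 1 = d} ∣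
      ∑ σ ∈ Δd, C (w σ) * f σ * ∏ σ' ∈ Δd.erase σ, chiPoly d N L σ' := by
  have hface : ∀ σ ∈ {σ ∈ Δd | #(faceOn a v σ) + 1 = d}, #(faceOn a v σ) + 1 = #σ :=
    fun σ hσ => by rw [(mem_filter.1 hσ).2, hcard σ (mem_filter.1 hσ).1]
  have hunit : IsUnit (∏ σ ∈ Δd with #(faceOn a v σ) + 1 = d,
      C (a ⬝ᵥ ∑ k ∈ σ \ faceOn a v σ, v k) : MvPolynomial (Fin d) ℝ) := by
    refine IsUnit.prod_iff.2 fun σ hσ => (isUnit_iff_ne_zero.2 ?_).map C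
    obtain ⟨i, hi⟩ := exists_sdiff_faceOn_eq_singleton (hface σ hσ)
    rw [hi, sum_singleton]
    exact dotProduct_ne_zero_of_sdiff_faceOn_eq hi
  refine hunit.dvd_mul_left.1 (pow_card_dvd_prod_mul_sum_mul_prod_erase (filter_subset _ _)
    (fun σ hσ => ?_) (linearForm_dvd_sum_residue hcard hspan hdual hcompat hbal ha))
  have hσΔ := (mem_filter.1 hσ).1
  exact C_mul_prod_linearForm_eq (hspan σ hσΔ) (hdual σ hσΔ) (hface σ hσ)

theorem card_associated_linearForm_le (hcard : ∀ σ ∈ Δd, σ.card = d)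
    (hdual : ∀ σ ∈ Δd, IsDualOn (L σ) v σ) (ha : a ≠ 0)
    [∀ p q : MvPolynomial (Fin d) ℝ, Decidable (Associated p q)] :
    #{e ∈ Δd.sigma id | Associated (linearForm (L e.1 e.2)) (linearForm a)} ≤
      #{σ ∈ Δd | #(faceOn a v σ) + 1 = d} := by
  have hface : ∀ e ∈ {e ∈ Δd.sigma id | Associated (linearForm (L e.1 e.2)) (linearForm a)},
      faceOn a v e.1 = e.1.erase e.2 := by
    rintro ⟨σ, i⟩ he
    obtain ⟨he, hassoc⟩ := mem_filter.1 he
    obtain ⟨hσ, hi⟩ := mem_sigma.1 he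
    obtain ⟨c, hc⟩ := exists_eq_smul_of_associated ha hassoc
    exact faceOn_eq_erase_of_eq_smul (hdual σ hσ) hi hc
  refine card_le_card_of_injOn Sigma.fst (fun e he => ?_) fun e he e' he' h => ?_
  · obtain ⟨hσ, hi⟩ := mem_sigma.1 (mem_filter.1 he).1
    refine mem_filter.2 ⟨hσ, ?_⟩
    rw [hface e he, card_erase_add_one (s := e.1) hi, hcard _ hσ]
  · obtain ⟨σ, i⟩ := e
    obtain ⟨σ', i'⟩ := e'
    dsimp only at h
    subst h
    have hi : i ∈ σ := (mem_sigma.1 (mem_filter.1 he).1).2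
    have := (hface ⟨σ, i⟩ he).symm.trans (hface ⟨σ, i'⟩ he')
    rw [erase_inj _ hi] at this
    rw [this]

theorem prod_chiPoly_dvd (hcard : ∀ σ ∈ Δd, σ.card = d)
    (hspan : ∀ σ ∈ Δd, Submodule.span ℝ (v '' ↑σ) = ⊤) (hdual : ∀ σ ∈ Δd, IsDualOn (L σ) v σ)
    (hcompat : IsCompatible Δd v f) (hbal : IsBalanced Δd v w) :
    ∏ σ ∈ Δd, chiPoly d N L σ ∣ ∑ σ ∈ Δd, C (w σ) * f σ * ∏ σ' ∈ Δd.erase σ, chiPoly d N L σ' := by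
  classical
  rw [show ∏ σ ∈ Δd, chiPoly d N L σ = ∏ e ∈ Δd.sigma id, linearForm (L e.1 e.2) from
    (prod_sigma Δd id fun e => linearForm (L e.1 e.2)).symm]
  refine prod_dvd_of_forall_pow_card_dvd (fun e he => ?_) fun e he => ?_ <;>
    obtain ⟨hσ, hi⟩ := mem_sigma.1 he
  · exact prime_linearForm ((hdual _ hσ).ne_zero hi)
  · have ha := (hdual _ hσ).ne_zero hi
    exact (pow_dvd_pow _ (card_associated_linearForm_le hcard hdual ha)).trans
      (linearForm_pow_card_dvd hcard hspan hdual hcompat hbal ha)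

end Residues

theorem stmt1_general (d N : ℕ)
    (Δd : Finset (Finset (Fin N))) (hcard : ∀ σ ∈ Δd, σ.card = d)
    (v : Fin N → Fin d → ℝ)
    (hbasis : ∀ σ ∈ Δd, LinearIndependent ℝ (fun k : {x : Fin N // x ∈ σ} => v k) ∧
      Submodule.span ℝ (v '' ↑σ) = ⊤)
    (L : Finset (Fin N) → Fin N → Fin d → ℝ)
    (hdual : ∀ σ ∈ Δd, ∀ i ∈ σ, ∀ k ∈ σ,
      (∑ j, L σ i j * v k j) = if i = k then 1 else 0)
    (f : Finset (Fin N) → MvPolynomial (Fin d) ℝ)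
    (hcompat : ∀ σ ∈ Δd, ∀ σ' ∈ Δd, ∀ τ : Finset (Fin N), τ.card + 1 = d →
      τ ⊆ σ → τ ⊆ σ' → ∀ x : Fin d → ℝ, x ∈ Submodule.span ℝ (v '' ↑τ) →
        eval x (f σ - f σ') = 0)
    (w : Finset (Fin N) → ℝ)
    (hbal : ∀ τ : Finset (Fin N), τ.card + 1 = d → (∃ σ ∈ Δd, τ ⊆ σ) →
      (∑ σ ∈ Δd.filter (fun σ => τ ⊆ σ), w σ • ∑ k ∈ σ \ τ, v k)
        ∈ Submodule.span ℝ (v '' ↑τ)) :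
    ∃ p : MvPolynomial (Fin d) ℝ,
      ∑ σ ∈ Δd,
          algebraMap (MvPolynomial (Fin d) ℝ) (FractionRing (MvPolynomial (Fin d) ℝ))
              (C (w σ) * f σ) /
            algebraMap (MvPolynomial (Fin d) ℝ) (FractionRing (MvPolynomial (Fin d) ℝ))
              (chiPoly d N L σ)
        = algebraMap (MvPolynomial (Fin d) ℝ) (FractionRing (MvPolynomial (Fin d) ℝ)) p := by
  replace hdual : ∀ σ ∈ Δd, IsDualOn (L σ) v σ := hdual
  have hχ : ∀ σ ∈ Δd, chiPoly d N L σ ≠ 0 := fun σ hσ =>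
    prod_ne_zero_iff.2 fun i hi => (prime_linearForm ((hdual σ hσ).ne_zero hi)).ne_zero
  obtain ⟨p, hp⟩ := prod_chiPoly_dvd hcard (fun σ hσ => (hbasis σ hσ).2) hdual hcompat hbal
  have hφ := IsFractionRing.injective (MvPolynomial (Fin d) ℝ)
    (FractionRing (MvPolynomial (Fin d) ℝ))
  refine ⟨p, ?_⟩
  rw [sum_div_eq_sum_mul_prod_erase_div_prod fun σ hσ => (map_ne_zero_iff _ hφ).2 (hχ σ hσ)]
  simp only [← map_prod, ← map_mul, ← map_sum, hp]
  rw [map_mul, mul_div_cancel_left₀ _ ((map_ne_zero_iff _ hφ).2 (prod_ne_zero_iff.2 hχ))]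

/-- if the weight `w` is balanced and the family `(f_σ)` is compatible
along common `(d−1)`-element subsets, then `Σ_σ w_σ f_σ/χ_σ` is a polynomial. -/
theorem stmt1 (d N : ℕ) (hd : 1 ≤ d) (hN : 1 ≤ N)
    (Δd : Finset (Finset (Fin N))) (hcard : ∀ σ ∈ Δd, σ.card = d)
    (v : Fin N → Fin d → ℝ)
    (hbasis : ∀ σ ∈ Δd, LinearIndependent ℝ (fun k : {x : Fin N // x ∈ σ} => v k) ∧
      Submodule.span ℝ (v '' ↑σ) = ⊤)
    (L : Finset (Fin N) → Fin N → Fin d → ℝ)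
    (hdual : ∀ σ ∈ Δd, ∀ i ∈ σ, ∀ k ∈ σ,
      (∑ j, L σ i j * v k j) = if i = k then 1 else 0)
    (f : Finset (Fin N) → MvPolynomial (Fin d) ℝ)
    (hcompat : ∀ σ ∈ Δd, ∀ σ' ∈ Δd, ∀ τ : Finset (Fin N), τ.card + 1 = d →
      τ ⊆ σ → τ ⊆ σ' → ∀ x : Fin d → ℝ, x ∈ Submodule.span ℝ (v '' ↑τ) →
        eval x (f σ - f σ') = 0)
    (w : Finset (Fin N) → ℝ)
    (hbal : ∀ τ : Finset (Fin N), τ.card + 1 = d → (∃ σ ∈ Δd, τ ⊆ σ) →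
      (∑ σ ∈ Δd.filter (fun σ => τ ⊆ σ), w σ • ∑ k ∈ σ \ τ, v k)
        ∈ Submodule.span ℝ (v '' ↑τ)) :
    ∃ p : MvPolynomial (Fin d) ℝ,
      ∑ σ ∈ Δd,
          algebraMap (MvPolynomial (Fin d) ℝ) (FractionRing (MvPolynomial (Fin d) ℝ))
              (C (w σ) * f σ) /
            algebraMap (MvPolynomial (Fin d) ℝ) (FractionRing (MvPolynomial (Fin d) ℝ))
              (chiPoly d N L σ)
        = algebraMap (MvPolynomial (Fin d) ℝ) (FractionRing (MvPolynomial (Fin d) ℝ)) p :=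
  stmt1_general d N Δd hcard v hbasis L hdual f hcompat w hbal
end

section
/- Let N ≥ 2 and let V ∈ ℝ[x_1,…,x_N]. In the larger polynomial ring ℝ[x_0, x_1,…,x_N] define W = V − Σ_{m=2}^{M} (x_0^m/m!) · Σ_{α_1,α_2 ≥ 1, α_1+α_2=m} ∂_1^{α_1} ∂_2^{α_2} V, where M is any integer at least the total degree of V (the inner sums vanish for m greater than the degree of V, so the sum is finite and independent of M). Then (∂_1 − ∂_0)(∂_2 − ∂_0) W = 0. Moreover W|_{x_0=0} = V and (∂_0 W)|_{x_0=0} = 0. -/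
open MvPolynomial

/-- The partial derivative `∂_i`, as a linear endomorphism of `ℝ[x_0,…,x_N]`. -/
noncomputable def pdOp (N : ℕ) (i : Fin (N + 1)) :
    MvPolynomial (Fin (N + 1)) ℝ →ₗ[ℝ] MvPolynomial (Fin (N + 1)) ℝ :=
  (pderiv i).toLinearMap

/-- The polynomial `W = V − Σ_{m=2}^{M} (x_0^m/m!) · Σ_{α_1,α_2 ≥ 1, α_1+α_2=m}
∂_1^{α_1} ∂_2^{α_2} V` in `ℝ[x_0,…,x_N]`, where `V ∈ ℝ[x_1,…,x_N]` is embedded via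
`rename Fin.succ`. -/
noncomputable def starSubdivW (N M : ℕ) (hN : 2 ≤ N) (V : MvPolynomial (Fin N) ℝ) :
    MvPolynomial (Fin (N + 1)) ℝ :=
  rename Fin.succ V -
    ∑ m ∈ Finset.Icc 2 M, C ((1 : ℝ) / m.factorial) * X (0 : Fin (N + 1)) ^ m *
      ∑ a ∈ Finset.Ico 1 m,
        (⇑(pderiv (⟨1, by omega⟩ : Fin (N + 1))))^[a]
          ((⇑(pderiv (⟨2, by omega⟩ : Fin (N + 1))))^[m - a] (rename Fin.succ V))

open Finset

/-!
Write `W = ∑ₘ x₀ᵐ/m! · cₘ` with coefficients free of `x₀`: `c₀ = V`, `c₁ = 0` and `cₘ = -Tₘ`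
for `m ≥ 2`, where `Tₘ = ∑_{a=1}^{m-1} ∂₁ᵃ ∂₂^{m-a} V`. Since `∂₀` shifts the coefficients of such
a series, `(∂₁ - ∂₀)(∂₂ - ∂₀) W` has coefficients `∂₁∂₂cₘ - (∂₁ + ∂₂)cₘ₊₁ + cₘ₊₂`. These vanish
by the recurrence `(∂₁ + ∂₂)Tₘ₊₁ = ∂₁∂₂Tₘ + Tₘ₊₂` (`m ≥ 1`), itself a consequence of
`Tₘ₊₁ = ∂₁(Tₘ + ∂₂ᵐV)`, and for `m = 0` by `T₂ = ∂₁∂₂V`. Truncating the series at `M` is harmless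
because `Tₘ = 0` as soon as `m` exceeds the total degree of `V`.
-/

namespace MvPolynomial

variable {R σ : Type*} [CommSemiring R]

theorem pderiv_comm (i j : σ) (p : MvPolynomial σ R) :
    pderiv i (pderiv j p) = pderiv j (pderiv i p) := by
  classical
  induction p using MvPolynomial.induction_on' with
  | add p q hp hq => simp only [map_add, hp, hq]
  | monomial s a =>
    rcases eq_or_ne i j with rfl | hij
    · rfl
    simp only [pderiv_monomial, tsub_right_comm, Finsupp.tsub_apply,
      Finsupp.single_eq_of_ne hij, Finsupp.single_eq_of_ne hij.symm, tsub_zero]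
    ring_nf

theorem totalDegree_pderiv_le (i : σ) (p : MvPolynomial σ R) :
    (pderiv i p).totalDegree ≤ p.totalDegree - 1 := by
  classical
  conv_lhs => rw [p.as_sum, map_sum]
  refine totalDegree_finsetSum_le fun s hs => ?_
  rw [pderiv_monomial]
  by_cases hi : s i = 0
  · simp [hi]
  refine (totalDegree_monomial_le _ _).trans ?_
  have hdeg := map_add Finsupp.degree (s - Finsupp.single i 1) (Finsupp.single i 1)
  rw [Finsupp.sub_add_single_one_cancel hi, Finsupp.degree_single] at hdeg
  have := le_totalDegree hs
  change Finsupp.degree (s - Finsupp.single i 1) ≤ _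
  change Finsupp.degree s ≤ _ at this
  omega

theorem totalDegree_iterate_pderiv_le (i : σ) (k : ℕ) (p : MvPolynomial σ R) :
    ((pderiv i)^[k] p).totalDegree ≤ p.totalDegree - k := by
  induction k with
  | zero => simp
  | succ k ih =>
    rw [Function.iterate_succ_apply']
    exact (totalDegree_pderiv_le i _).trans (by omega)

theorem iterate_pderiv_eq_zero_of_totalDegree_lt (i : σ) {k : ℕ} {p : MvPolynomial σ R}
    (h : p.totalDegree < k) : (pderiv i)^[k] p = 0 := by
  obtain ⟨k, rfl⟩ : ∃ k', k = k' + 1 := ⟨k - 1, by omega⟩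
  have hC : ((pderiv i)^[k] p).totalDegree = 0 :=
    Nat.eq_zero_of_le_zero ((totalDegree_iterate_pderiv_le i k p).trans (by omega))
  rw [Function.iterate_succ_apply', totalDegree_eq_zero_iff_eq_C.mp hC, pderiv_C]

theorem aeval_ite_eq_self_of_notMem_vars [DecidableEq σ] {t : σ} {q : MvPolynomial σ R}
    (h : t ∉ q.vars) : aeval (fun k => if k = t then 0 else X k) q = q := by
  convert aeval_ite_mem_eq_self q (s := {t}ᶜ) fun k hk => by rintro rfl; exact h hk using 3
  funext k
  by_cases hk : k = t <;> simp [hk]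

end MvPolynomial

section MixedDerivSum

variable {R σ : Type*} [CommSemiring R]

theorem pderiv_iterate_comm (i j : σ) (k : ℕ) (p : MvPolynomial σ R) :
    pderiv i ((pderiv j)^[k] p) = (pderiv j)^[k] (pderiv i p) :=
  Function.Commute.iterate_right (pderiv_comm i j) k p

noncomputable def mixedDerivSum (i j : σ) (p : MvPolynomial σ R) (m : ℕ) : MvPolynomial σ R :=
  ∑ a ∈ Ico 1 m, (pderiv i)^[a] ((pderiv j)^[m - a] p)

variable {i j : σ} {p : MvPolynomial σ R}

theorem mixedDerivSum_of_le_one {m : ℕ} (hm : m ≤ 1) : mixedDerivSum i j p m = 0 := by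
  rw [mixedDerivSum, Ico_eq_empty (by omega), sum_empty]

theorem mixedDerivSum_two : mixedDerivSum i j p 2 = pderiv i (pderiv j p) := by
  simp [mixedDerivSum]

theorem mixedDerivSum_eq_zero_of_totalDegree_lt {m : ℕ} (h : p.totalDegree < m) :
    mixedDerivSum i j p m = 0 := by
  refine sum_eq_zero fun a ha => iterate_pderiv_eq_zero_of_totalDegree_lt i ?_
  have := totalDegree_iterate_pderiv_le j (m - a) p
  rw [mem_Ico] at ha
  omega

theorem pderiv_mixedDerivSum_of_pderiv_eq_zero {t : σ} (ht : pderiv t p = 0) (m : ℕ) :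
    pderiv t (mixedDerivSum i j p m) = 0 := by
  refine (map_sum _ _ _).trans (sum_eq_zero fun a _ => ?_)
  rw [pderiv_iterate_comm, pderiv_iterate_comm, ht, Function.iterate_fixed (map_zero _),
    Function.iterate_fixed (map_zero _)]

theorem mixedDerivSum_succ {m : ℕ} (hm : 1 ≤ m) :
    mixedDerivSum i j p (m + 1) = pderiv i (mixedDerivSum i j p m + (pderiv j)^[m] p) := by
  rw [mixedDerivSum, sum_eq_sum_Ico_succ_bot (by omega), ← sum_Ico_add', map_add,
    mixedDerivSum, map_sum, add_comm]
  congr 1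
  exact sum_congr rfl fun a _ => by
    rw [Function.iterate_succ_apply', show m + 1 - (a + 1) = m - a by omega]

theorem mixedDerivSum_recurrence {m : ℕ} (hm : 1 ≤ m) :
    pderiv i (mixedDerivSum i j p (m + 1)) + pderiv j (mixedDerivSum i j p (m + 1)) =
      pderiv i (pderiv j (mixedDerivSum i j p m)) + mixedDerivSum i j p (m + 2) := by
  have hj : pderiv j (mixedDerivSum i j p (m + 1)) =
      pderiv i (pderiv j (mixedDerivSum i j p m)) + pderiv i ((pderiv j)^[m + 1] p) := by
    rw [mixedDerivSum_succ hm, pderiv_comm, map_add, map_add, Function.iterate_succ_apply']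
  rw [hj, mixedDerivSum_succ (by omega : 1 ≤ m + 1), map_add]
  abel

end MixedDerivSum

section ExpSeries

variable {R σ : Type*} [Field R] (t : σ)

noncomputable def expSeries (c : ℕ → MvPolynomial σ R) (n : ℕ) : MvPolynomial σ R :=
  ∑ m ∈ range n, C (1 / (m.factorial : R)) * X t ^ m * c m

variable {t} {c : ℕ → MvPolynomial σ R} {n : ℕ}

theorem expSeries_succ_of_eq_zero (h : c n = 0) : expSeries t c (n + 1) = expSeries t c n := by
  rw [expSeries, sum_range_succ, h, mul_zero, add_zero, expSeries]

theorem pderiv_expSeries_of_ne {j : σ} (h : t ≠ j) :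
    pderiv j (expSeries t c n) = expSeries t (fun m => pderiv j (c m)) n := by
  refine (map_sum _ _ _).trans (sum_congr rfl fun m _ => ?_)
  rw [pderiv_mul, pderiv_C_mul, pderiv_pow, pderiv_X_of_ne h]
  ring

theorem pderiv_X_pow_succ_div_factorial [CharZero R] (m : ℕ) :
    pderiv t (C (1 / ((m + 1).factorial : R)) * X t ^ (m + 1)) =
      C (1 / (m.factorial : R)) * X t ^ m := by
  rw [pderiv_C_mul, pderiv_pow, pderiv_X_self, mul_one, Nat.add_sub_cancel, ← mul_assoc,
    ← map_natCast C, ← C_mul, Nat.factorial_succ]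
  congr 2
  push_cast
  field_simp

theorem pderiv_expSeries_self [CharZero R] (hc : ∀ m, pderiv t (c m) = 0) :
    pderiv t (expSeries t c (n + 1)) = expSeries t (fun m => c (m + 1)) n := by
  rw [expSeries, sum_range_succ', map_add, map_sum]
  simp only [pderiv_mul (f := _ * _), hc, mul_zero, add_zero, pderiv_X_pow_succ_div_factorial]
  simp [expSeries]

theorem sub_pderiv_expSeries [CharZero R] {j : σ} (hj : t ≠ j) (hc : ∀ m, pderiv t (c m) = 0)
    (hn : c (n + 1) = 0) :
    pderiv j (expSeries t c (n + 1)) - pderiv t (expSeries t c (n + 1)) =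
      expSeries t (fun m => pderiv j (c m) - c (m + 1)) (n + 1) := by
  rw [pderiv_expSeries_of_ne hj, pderiv_expSeries_self hc,
    ← expSeries_succ_of_eq_zero (c := fun m => c (m + 1)) hn]
  simp only [expSeries, mul_sub, sum_sub_distrib]

theorem expSeries_pde [CharZero R] {i j : σ} (hi : t ≠ i) (hj : t ≠ j)
    (hc : ∀ m, pderiv t (c m) = 0) (hn : ∀ m, n < m → c m = 0)
    (hrec : ∀ m, pderiv i (pderiv j (c m) - c (m + 1)) - (pderiv j (c (m + 1)) - c (m + 2)) = 0) :
    pderiv i (pderiv j (expSeries t c (n + 1)) - pderiv t (expSeries t c (n + 1))) -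
      pderiv t (pderiv j (expSeries t c (n + 1)) - pderiv t (expSeries t c (n + 1))) = 0 := by
  have hd : ∀ m, pderiv t (pderiv j (c m) - c (m + 1)) = 0 := fun m => by
    rw [map_sub, pderiv_comm, hc, hc, map_zero, sub_zero]
  rw [sub_pderiv_expSeries hj hc (hn _ n.lt_succ_self),
    sub_pderiv_expSeries hi hd (by rw [hn _ (by omega), hn _ (by omega), map_zero, sub_zero])]
  exact sum_eq_zero fun m _ => by simp only [hrec, mul_zero]

theorem aeval_expSeries_succ {A : Type*} [CommSemiring A] [Algebra R A] {f : σ → A}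
    (hf : f t = 0) : aeval f (expSeries t c (n + 1)) = aeval f (c 0) := by
  simp [expSeries, sum_range_succ', hf]

end ExpSeries

section Subdivision

variable {R σ : Type*} [Field R] {t i j : σ} {p : MvPolynomial σ R}

noncomputable def subdivCoeff (i j : σ) (p : MvPolynomial σ R) (m : ℕ) : MvPolynomial σ R :=
  (if m = 0 then p else 0) - mixedDerivSum i j p m

theorem subdivCoeff_zero : subdivCoeff i j p 0 = p := by
  simp [subdivCoeff, mixedDerivSum_of_le_one]

theorem subdivCoeff_one : subdivCoeff i j p 1 = 0 := by
  simp [subdivCoeff, mixedDerivSum_of_le_one]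

theorem subdivCoeff_eq_zero_of_totalDegree_lt {m : ℕ} (h : p.totalDegree < m) :
    subdivCoeff i j p m = 0 := by
  rw [subdivCoeff, if_neg (by omega), mixedDerivSum_eq_zero_of_totalDegree_lt h, sub_zero]

theorem pderiv_subdivCoeff (ht : pderiv t p = 0) (m : ℕ) :
    pderiv t (subdivCoeff i j p m) = 0 := by
  rw [subdivCoeff, map_sub, pderiv_mixedDerivSum_of_pderiv_eq_zero ht]
  split_ifs <;> simp [ht]

theorem subdivCoeff_recurrence (m : ℕ) :
    pderiv i (pderiv j (subdivCoeff i j p m) - subdivCoeff i j p (m + 1)) -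
      (pderiv j (subdivCoeff i j p (m + 1)) - subdivCoeff i j p (m + 2)) = 0 := by
  rcases Nat.eq_zero_or_pos m with rfl | hm
  · simp [subdivCoeff, mixedDerivSum_of_le_one, mixedDerivSum_two]
  · simp only [subdivCoeff, if_neg (by omega : m ≠ 0), if_neg (by omega : m + 1 ≠ 0),
      if_neg (by omega : m + 2 ≠ 0), zero_sub, map_neg, map_sub]
    linear_combination mixedDerivSum_recurrence (i := i) (j := j) (p := p) hm

theorem sub_sum_Icc_eq_expSeries {M : ℕ} (hp : p.totalDegree ≤ M) :
    p - ∑ m ∈ Icc 2 M, C (1 / (m.factorial : R)) * X t ^ m * mixedDerivSum i j p m =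
      expSeries t (subdivCoeff i j p) (M + 2) := by
  simp only [expSeries, subdivCoeff, mul_sub, sum_sub_distrib, mul_ite, mul_zero, sum_ite_eq',
    mem_range]
  congr 1
  · simp
  · refine sum_subset (fun m hm => by simp at hm ⊢; omega) fun m hm hm' => ?_
    simp only [mem_range, mem_Icc] at hm hm'
    rcases Nat.lt_or_ge m 2 with h | h
    · rw [mixedDerivSum_of_le_one (by omega), mul_zero]
    · rw [mixedDerivSum_eq_zero_of_totalDegree_lt (by omega), mul_zero]

end Subdivision

/-- `W` satisfies `(∂_1 − ∂_0)(∂_2 − ∂_0) W = 0`, `W|_{x_0=0} = V`, and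
`(∂_0 W)|_{x_0=0} = 0`, provided `M` is at least the total degree of `V`. -/
theorem stmt4 (N M : ℕ) (hN : 2 ≤ N) (V : MvPolynomial (Fin N) ℝ)
    (hM : V.totalDegree ≤ M) :
    (pdOp N ⟨1, by omega⟩ - pdOp N 0)
      ((pdOp N ⟨2, by omega⟩ - pdOp N 0) (starSubdivW N M hN V)) = 0 ∧
    aeval (fun k : Fin (N + 1) => if k = 0 then 0 else X k) (starSubdivW N M hN V)
        = rename Fin.succ V ∧
    aeval (fun k : Fin (N + 1) =>
        if k = 0 then 0 else (X k : MvPolynomial (Fin (N + 1)) ℝ))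
        (pderiv (0 : Fin (N + 1)) (starSubdivW N M hN V)) = 0 := by
  have hvars : (0 : Fin (N + 1)) ∉ (rename Fin.succ V).vars := fun h => by
    obtain ⟨k, -, hk⟩ := mem_vars_rename _ _ h
    exact Fin.succ_ne_zero k hk
  have h0 : pderiv (0 : Fin (N + 1)) (rename Fin.succ V) = 0 := pderiv_eq_zero_of_notMem_vars hvars
  have hdeg : (rename Fin.succ V).totalDegree ≤ M := (totalDegree_rename_le _ _).trans hM
  have hW : starSubdivW N M hN V =
      expSeries 0 (subdivCoeff ⟨1, by omega⟩ ⟨2, by omega⟩ (rename Fin.succ V)) (M + 2) :=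
    sub_sum_Icc_eq_expSeries hdeg
  rw [hW]
  refine ⟨?_, ?_, ?_⟩
  · exact expSeries_pde (by simp [Fin.ext_iff]) (by simp [Fin.ext_iff]) (pderiv_subdivCoeff h0)
      (fun _ hm => subdivCoeff_eq_zero_of_totalDegree_lt (by omega)) subdivCoeff_recurrence
  · rw [aeval_expSeries_succ (by simp), subdivCoeff_zero, aeval_ite_eq_self_of_notMem_vars hvars]
  · rw [pderiv_expSeries_self (pderiv_subdivCoeff h0), aeval_expSeries_succ (by simp),
      subdivCoeff_one, map_zero]
end

section
/- Let M be a matroid on a finite ground set E, let i ∈ E be such that {i} is a flat of M, and let F ⊆ E be such that i ∉ F and both F and F ∪ {i} are flats of M. Then the map G ↦ G ∩ F is an order isomorphism (with respect to inclusion) from the set of flats G of M satisfying {i} ⊆ G ⊆ F ∪ {i} onto the set of flats G of M satisfying G ⊆ F, and its inverse is given by G ↦ G ∪ {i}. -/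
/-!
Since `i ∉ F`, intersecting with `F` and inserting `i` are mutually inverse, monotone maps
between sets `G` with `i ∈ G ⊆ insert i F` and subsets of `F`; the only matroid content is that
both maps preserve flats. Intersections of flats are flats. If `G ⊆ F` is a flat and some
`x ∉ insert i G` lay in the closure of `insert i G`, then `x ∈ F` because `insert i F` is a flat,
and the exchange property would put `i` in the closure of `insert x G ⊆ F`, i.e. in `F`.
-/

open Set

namespace Matroid

variable {α : Type*} {M : Matroid α} {F G : Set α} {i : α}

lemma IsFlat.inter (hF : M.IsFlat F) (hG : M.IsFlat G) : M.IsFlat (F ∩ G) := by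
  rw [inter_eq_iInter]
  exact IsFlat.iInter fun b ↦ by cases b <;> assumption

lemma IsFlat.insert_of_subset (hF : M.IsFlat F) (hFi : M.IsFlat (insert i F)) (hiF : i ∉ F)
    (hG : M.IsFlat G) (hGF : G ⊆ F) : M.IsFlat (insert i G) := by
  have hiE : i ∈ M.E := hFi.subset_ground (mem_insert i F)
  rw [isFlat_iff_closure_eq]
  refine (M.subset_closure _ (insert_subset hiE hG.subset_ground)).antisymm' fun x hx ↦ ?_
  by_contra hxG
  have hxF : x ∈ F := by
    have hxiF : x ∈ insert i F :=
      hFi.closure ▸ M.closure_subset_closure (insert_subset_insert hGF) hx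
    exact hxiF.resolve_left fun hxi ↦ hxG (hxi ▸ mem_insert x G)
  have hix : i ∈ M.closure (insert x G) :=
    (closure_exchange ⟨hx, fun hxcl ↦ hxG (mem_insert_of_mem i (hG.closure ▸ hxcl))⟩).1
  exact hiF (hF.closure ▸ M.closure_subset_closure (insert_subset hxF hGF) hix)

def flatsInsertOrderIso (hF : M.IsFlat F) (hFi : M.IsFlat (insert i F)) (hiF : i ∉ F) :
    {G // M.IsFlat G ∧ i ∈ G ∧ G ⊆ insert i F} ≃o {G // M.IsFlat G ∧ G ⊆ F} :=
  Equiv.toOrderIso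
    { toFun G := ⟨G.1 ∩ F, G.2.1.inter hF, inter_subset_right⟩
      invFun G := ⟨insert i G.1, hF.insert_of_subset hFi hiF G.2.1 G.2.2, mem_insert i G.1,
        insert_subset_insert G.2.2⟩
      left_inv G := Subtype.ext <| by
        dsimp only
        rw [insert_inter_distrib, insert_eq_of_mem G.2.2.1, inter_eq_left.2 G.2.2.2]
      right_inv G := Subtype.ext <| by
        dsimp only
        rw [insert_inter_of_notMem hiF, inter_eq_left.2 G.2.2] }
    (fun _ _ h ↦ inter_subset_inter_left F h) (fun _ _ h ↦ insert_subset_insert h)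

end Matroid

theorem stmt10_general (α : Type*) (M : Matroid α)
    (i : α)
    (F : Set α) (hiF : i ∉ F)
    (hFflat : M.closure F = F) (hFiflat : M.closure (insert i F) = insert i F) :
    ∃ e : {G : Set α // M.closure G = G ∧ i ∈ G ∧ G ⊆ insert i F} ≃o
        {G : Set α // M.closure G = G ∧ G ⊆ F},
      (∀ G, (e G : Set α) = (G : Set α) ∩ F) ∧
      (∀ G, (e.symm G : Set α) = insert i (G : Set α)) := by
  -- `IsFlat` is not definitionally `closure G = G`, so the subtypes are transported by rewriting.
  have hflat : M.IsFlat = fun G ↦ M.closure G = G :=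
    funext fun _ ↦ propext Matroid.isFlat_iff_closure_eq
  have h : ∃ e : {G // M.IsFlat G ∧ i ∈ G ∧ G ⊆ insert i F} ≃o {G // M.IsFlat G ∧ G ⊆ F},
      (∀ G, (e G : Set α) = (G : Set α) ∩ F) ∧ ∀ G, (e.symm G : Set α) = insert i (G : Set α) :=
    ⟨Matroid.flatsInsertOrderIso (Matroid.isFlat_iff_closure_eq.2 hFflat)
      (Matroid.isFlat_iff_closure_eq.2 hFiflat) hiF,
      fun _ ↦ rfl, fun _ ↦ rfl⟩
  rw [hflat] at h
  exact h

/-- if `{i}` is a flat of `M` and `F`, `F ∪ {i}` are flats with `i ∉ F`,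
then `G ↦ G ∩ F` is an order isomorphism from the flats `G` with `{i} ⊆ G ⊆ F ∪ {i}`
onto the flats `G` with `G ⊆ F`, with inverse `G ↦ G ∪ {i}`.
(Here a flat is a set `G` with `M.closure G = G`.) -/
theorem stmt10 (α : Type*) (M : Matroid α) (hfin : M.E.Finite)
    (i : α) (hi : i ∈ M.E) (hiflat : M.closure {i} = {i})
    (F : Set α) (hF : F ⊆ M.E) (hiF : i ∉ F)
    (hFflat : M.closure F = F) (hFiflat : M.closure (insert i F) = insert i F) :
    ∃ e : {G : Set α // M.closure G = G ∧ i ∈ G ∧ G ⊆ insert i F} ≃o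
        {G : Set α // M.closure G = G ∧ G ⊆ F},
      (∀ G, (e G : Set α) = (G : Set α) ∩ F) ∧
      (∀ G, (e.symm G : Set α) = insert i (G : Set α)) :=
  stmt10_general α M i F hiF hFflat hFiflat
end

section
/- Let Δ be a finite abstract simplicial complex on the vertex set {1,…,N} (a collection of subsets of {1,…,N} closed under taking subsets), let I_Δ ⊆ ℝ[∂_1,…,∂_N] be the ideal generated by the monomials ∏_{k∈S} ∂_k over subsets S ∉ Δ, and let Θ ⊆ ℝ[∂_1,…,∂_N]_1 be a linear subspace of linear forms such that for every face σ ∈ Δ and every i ∈ σ there exists l ∈ Θ whose coefficient at ∂_i equals 1 and whose coefficient at ∂_k equals 0 for every k ∈ σ∖{i}. Then the quotient ring ℝ[∂_1,…,∂_N]/(I_Δ + (Θ)) is spanned as an ℝ-vector space by the images of the squarefree monomials ∂_σ = ∏_{k∈σ} ∂_k for σ ∈ Δ (with ∂_∅ = 1). -/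
open MvPolynomial

/-- The Stanley–Reisner ideal `I_Δ`, generated by the monomials `∏_{k∈S} ∂_k`
over non-faces `S ∉ Δ`. -/
noncomputable def srIdeal (N : ℕ) (Δ : Finset (Finset (Fin N))) :
    Ideal (MvPolynomial (Fin N) ℝ) :=
  Ideal.span {p | ∃ S : Finset (Fin N), S ∉ Δ ∧ p = ∏ k ∈ S, X k}

/-- The ideal `I_Δ + (Θ)`. -/
noncomputable def chowIdeal14 (N : ℕ) (Δ : Finset (Finset (Fin N)))
    (Θ : Submodule ℝ (MvPolynomial (Fin N) ℝ)) : Ideal (MvPolynomial (Fin N) ℝ) :=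
  srIdeal N Δ ⊔ Ideal.span (Θ : Set (MvPolynomial (Fin N) ℝ))

/-! Modulo `I`, a monomial `X^m` whose support is not a face vanishes. If its support is a face `s`
and some `i ∈ s` occurs twice, write `X^m = X^m' * X_i` and pick `l ∈ Θ` with `l ≡ X_i` modulo the
variables outside `s`: then `X^m ≡ X^m' * (X_i - l)` is a combination of monomials `X^m' * X_k`,
`k ∉ s`, of the same degree but with one more variable in the support. So `deg m - #supp m`
drops, and the induction ends at squarefree monomials of faces. -/

namespace Finsupp

variable {σ : Type*}

theorem degree_eq_one_iff {d : σ →₀ ℕ} : d.degree = 1 ↔ ∃ k, d = single k 1 := by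
  constructor
  · classical
    intro h
    obtain ⟨k, hk⟩ := Multiset.card_eq_one.1 ((card_toMultiset d).trans h)
    exact ⟨k, by rw [← toMultiset_toFinsupp d, hk, Multiset.toFinsupp_singleton]⟩
  · rintro ⟨k, rfl⟩
    exact degree_single k 1

theorem card_support_le_degree (d : σ →₀ ℕ) : d.support.card ≤ d.degree := by
  rw [degree_apply, Finset.card_eq_sum_ones]
  exact Finset.sum_le_sum fun i hi => Nat.one_le_iff_ne_zero.2 (mem_support_iff.1 hi)

theorem support_add_single_one [DecidableEq σ] (d : σ →₀ ℕ) (k : σ) :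
    (d + single k 1).support = insert k d.support := by
  rw [support_add_eq_union, support_single _ one_ne_zero, Finset.union_comm,
    Finset.insert_eq]

end Finsupp

namespace MvPolynomial

open Finsupp

variable {R σ : Type*}

section CommSemiring

variable [CommSemiring R]

theorem prod_X_support_dvd_monomial (m : σ →₀ ℕ) :
    ∏ k ∈ m.support, (X k : MvPolynomial σ R) ∣ monomial m 1 := by
  rw [← prod_X_pow_eq_monomial]
  exact Finset.prod_dvd_prod_of_dvd _ _ fun k hk => dvd_pow_self _ (Finsupp.mem_support_iff.1 hk)

theorem monomial_eq_prod_X_support {m : σ →₀ ℕ} (hm : ∀ k, m k ≤ 1) :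
    monomial m (1 : R) = ∏ k ∈ m.support, X k := by
  rw [← prod_X_pow_eq_monomial]
  refine Finset.prod_congr rfl fun k hk => ?_
  rw [le_antisymm (hm k) (Nat.one_le_iff_ne_zero.2 (Finsupp.mem_support_iff.1 hk)), pow_one]

theorem monomial_mul_mem_of_isHomogeneous_one {M : Submodule R (MvPolynomial σ R)}
    {p : MvPolynomial σ R} (hp : p.IsHomogeneous 1) (m : σ →₀ ℕ)
    (h : ∀ k, coeff (single k 1) p ≠ 0 → monomial (m + single k 1) 1 ∈ M) :
    monomial m 1 * p ∈ M := by
  rw [p.as_sum, Finset.mul_sum]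
  refine Submodule.sum_mem _ fun d hd => ?_
  have hd : coeff d p ≠ 0 := mem_support_iff.1 hd
  obtain ⟨k, rfl⟩ := degree_eq_one_iff.1 (by_contra fun h1 => hd (hp.coeff_eq_zero h1))
  rw [monomial_mul, one_mul, ← mul_one (coeff _ p), ← smul_eq_mul, ← smul_monomial]
  exact M.smul_mem _ (h k hd)

end CommSemiring

variable [CommRing R]

theorem monomial_add_single_mem_of_linearForm {M : Submodule R (MvPolynomial σ R)}
    {l : MvPolynomial σ R} (hl : l.IsHomogeneous 1) {i : σ} (hli : coeff (single i 1) l = 1)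
    {m : σ →₀ ℕ} (hml : monomial m 1 * l ∈ M)
    (h : ∀ k ≠ i, coeff (single k 1) l ≠ 0 → monomial (m + single k 1) 1 ∈ M) :
    monomial (m + single i 1) 1 ∈ M := by
  have hsplit :
      monomial (m + single i 1) (1 : R) = monomial m 1 * l - monomial m 1 * (l - X i) := by
    rw [mul_sub, sub_sub_cancel, X, monomial_mul, mul_one]
  rw [hsplit]
  refine M.sub_mem hml (monomial_mul_mem_of_isHomogeneous_one (hl.sub (isHomogeneous_X R i)) m
    fun k hk => ?_)
  classical
  have hki : k ≠ i := by
    rintro rfl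
    simp [hli] at hk
  rw [coeff_sub, coeff_X, if_neg (fun hik => hki (single_left_injective one_ne_zero hik).symm),
    sub_zero] at hk
  exact h k hki hk

def HasSeparatingLinearForms (Δ : Set (Finset σ)) (I : Ideal (MvPolynomial σ R)) : Prop :=
  ∀ s ∈ Δ, ∀ i ∈ s, ∃ l ∈ I, l.IsHomogeneous 1 ∧ coeff (single i 1) l = 1 ∧
    ∀ k ∈ s, k ≠ i → coeff (single k 1) l = 0

variable {Δ : Set (Finset σ)} {I : Ideal (MvPolynomial σ R)}

theorem monomial_mem_of_prod_X_mem {M : Submodule R (MvPolynomial σ R)} (hIM : ∀ p ∈ I, p ∈ M)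
    (hnonface : ∀ s ∉ Δ, ∏ k ∈ s, X k ∈ I) (hsep : HasSeparatingLinearForms Δ I)
    (hface : ∀ s ∈ Δ, ∏ k ∈ s, X k ∈ M) (m : σ →₀ ℕ) : monomial m 1 ∈ M := by
  classical
  by_cases hm : m.support ∈ Δ
  swap
  · exact hIM _ (I.mem_of_dvd (prod_X_support_dvd_monomial m) (hnonface _ hm))
  by_cases hsq : ∀ k, m k ≤ 1
  · rw [monomial_eq_prod_X_support hsq]
    exact hface _ hm
  push Not at hsq
  obtain ⟨i, hi⟩ := hsq
  obtain ⟨m, rfl⟩ : ∃ m', m = m' + single i 1 :=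
    ⟨m - single i 1, (tsub_add_cancel_of_le (single_le_iff.2 hi.le)).symm⟩
  have hsupp : (m + single i 1).support = m.support := by
    rw [Finsupp.add_apply, single_eq_same] at hi
    rw [support_add_single_one, Finset.insert_eq_of_mem (Finsupp.mem_support_iff.2 (by omega))]
  obtain ⟨l, hlI, hl, hli, hl0⟩ := hsep _ hm i (by simp [support_add_single_one])
  refine monomial_add_single_mem_of_linearForm hl hli (hIM _ (I.mul_mem_left _ hlI))
    fun k hki hk => ?_
  have hk' : k ∉ m.support := fun hkm => hk (hl0 k (hsupp ▸ hkm) hki)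
  exact monomial_mem_of_prod_X_mem hIM hnonface hsep hface (m + single k 1)
termination_by m.degree - m.support.card
decreasing_by
  classical
  subst_vars
  rw [map_add, map_add, degree_single, degree_single, hsupp, support_add_single_one,
    Finset.card_insert_of_notMem hk']
  have := card_support_le_degree m
  omega

theorem span_mk_prod_X_eq_top (hnonface : ∀ s ∉ Δ, ∏ k ∈ s, X k ∈ I)
    (hsep : HasSeparatingLinearForms Δ I) :
    Submodule.span R {q | ∃ s ∈ Δ, q = Ideal.Quotient.mk I (∏ k ∈ s, X k)} = ⊤ := by
  set S := Submodule.span R {q | ∃ s ∈ Δ, q = Ideal.Quotient.mk I (∏ k ∈ s, X k)}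
  set π := (Ideal.Quotient.mkₐ R I).toLinearMap
  have hπ : Function.Surjective π := Ideal.Quotient.mkₐ_surjective R I
  have hcomap : S.comap π = ⊤ := by
    refine eq_top_iff.2 ((basisMonomials σ R).span_eq.ge.trans (Submodule.span_le.2 ?_))
    rintro _ ⟨m, rfl⟩
    rw [coe_basisMonomials]
    refine monomial_mem_of_prod_X_mem (M := S.comap π) (fun p hp => ?_) hnonface hsep
      (fun s hs => Submodule.mem_comap.2 (Submodule.subset_span ⟨s, hs, rfl⟩)) m
    simp [π, Ideal.Quotient.eq_zero_iff_mem.2 hp]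
  rw [← Submodule.map_comap_eq_of_surjective hπ S, hcomap, Submodule.map_top,
    LinearMap.range_eq_top.2 hπ]

end MvPolynomial

theorem stmt14_general (N : ℕ) (Δ : Finset (Finset (Fin N)))
    (Θ : Submodule ℝ (MvPolynomial (Fin N) ℝ))
    (hΘlin : ∀ l ∈ Θ, l.IsHomogeneous 1)
    (hΘ : ∀ σ ∈ Δ, ∀ i ∈ σ, ∃ l ∈ Θ,
      coeff (Finsupp.single i 1) l = 1 ∧
      ∀ k ∈ σ, k ≠ i → coeff (Finsupp.single k 1) l = 0) :
    Submodule.span ℝ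
        {q : MvPolynomial (Fin N) ℝ ⧸ chowIdeal14 N Δ Θ |
          ∃ σ ∈ Δ, q = Ideal.Quotient.mk (chowIdeal14 N Δ Θ) (∏ k ∈ σ, X k)} = ⊤ := by
  refine span_mk_prod_X_eq_top (Δ := (Δ : Set (Finset (Fin N))))
    (fun s hs => Ideal.mem_sup_left (Ideal.subset_span ⟨s, hs, rfl⟩))
    fun s hs i hi => ?_
  obtain ⟨l, hlΘ, hli, hl0⟩ := hΘ s hs i hi
  exact ⟨l, Ideal.mem_sup_right (Ideal.subset_span hlΘ), hΘlin l hlΘ, hli, hl0⟩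

/-- if for every face `σ ∈ Δ` and every `i ∈ σ` there is a linear form
`l ∈ Θ` with coefficient `1` at `∂_i` and coefficient `0` at `∂_k` for `k ∈ σ∖{i}`,
then `ℝ[∂_1,…,∂_N]/(I_Δ + (Θ))` is spanned over `ℝ` by the squarefree monomials
`∂_σ = ∏_{k∈σ} ∂_k`, `σ ∈ Δ`. -/
theorem stmt14 (N : ℕ) (Δ : Finset (Finset (Fin N)))
    (hΔ : ∀ σ ∈ Δ, ∀ τ ⊆ σ, τ ∈ Δ)
    (Θ : Submodule ℝ (MvPolynomial (Fin N) ℝ))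
    (hΘlin : ∀ l ∈ Θ, l.IsHomogeneous 1)
    (hΘ : ∀ σ ∈ Δ, ∀ i ∈ σ, ∃ l ∈ Θ,
      coeff (Finsupp.single i 1) l = 1 ∧
      ∀ k ∈ σ, k ≠ i → coeff (Finsupp.single k 1) l = 0) :
    Submodule.span ℝ
        {q : MvPolynomial (Fin N) ℝ ⧸ chowIdeal14 N Δ Θ |
          ∃ σ ∈ Δ, q = Ideal.Quotient.mk (chowIdeal14 N Δ Θ) (∏ k ∈ σ, X k)} = ⊤ :=
  stmt14_general N Δ Θ hΘlin hΘ
end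

section
/- Let Δ be a finite abstract simplicial complex on the vertex set {1,…,N} and let τ ∈ Δ be a face with j = |τ| ≥ 2. Let Δ̂ be the star subdivision of Δ at τ with new vertex 0. Then the ℝ-algebra map ℝ[∂_1,…,∂_N] → ℝ[∂_0, ∂_1,…,∂_N] sending ∂_i ↦ ∂_i + ∂_0 for i ∈ τ and ∂_i ↦ ∂_i for i ∉ τ induces a well-defined injective ring homomorphism π* : 𝒜(Δ) → 𝒜(Δ̂) between the Stanley–Reisner rings, and 𝒜(Δ̂) is the internal direct sum of ℝ-vector subspaces 𝒜(Δ̂) = π*(𝒜(Δ)) ⊕ ∂_0·π*(𝒜(Δ)) ⊕ ∂_0²·π*(𝒜(Δ)) ⊕ ⋯ ⊕ ∂_0^{j−1}·π*(𝒜(Δ)). -/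
/-!
Substituting `∂_i ↦ ∂_i - ∂_0` for `i ∈ τ` identifies `ℝ[∂_0, …, ∂_N]` with `A[T]`, where
`A = ℝ[∂_1, …, ∂_N]` and `T = ∂_0`, and turns `π*` into the inclusion of constants `A → A[T]`.
Under this identification the Stanley–Reisner ideal of `Δ̂` becomes `I_Δ + T · I_st + (G)`, where
`I_st` is the Stanley–Reisner ideal of the closed star of `τ` and `G = ∏_{i ∈ τ} (T - ∂_i)` is
monic of degree `j`. Division by `G` gives every class a representative `∑_{k < j} a_k T^k`.
Since `I_Δ ⊆ I_st` and `G(0) · I_st ⊆ I_Δ`, reducing modulo `I_st` shows that such a polynomial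
lies in the ideal only if `a_0 ∈ I_Δ` and `a_k ∈ I_st` for `k ≥ 1`; this gives both the
injectivity of `π*` and the directness of the sum.
-/

open MvPolynomial

/-- The Stanley–Reisner ideal of a collection `Δ` of subsets of a vertex type `V`:
the ideal generated by the monomials `∏_{s∈T} ∂_s` over non-faces `T ∉ Δ`. -/
noncomputable def srIdealOf (V : Type*) (isFace : Finset V → Prop) :
    Ideal (MvPolynomial V ℝ) :=
  Ideal.span {p | ∃ T : Finset V, ¬ isFace T ∧ p = ∏ s ∈ T, X s}

/-- The faces of the star subdivision `Δ̂` of `Δ` at the face `τ`, with new vertex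
`none`: the faces `σ ∈ Δ` with `τ ⊄ σ` (embedded via `some`), together with
`{none} ∪ σ` for those `σ ∈ Δ` with `τ ⊄ σ` and `σ ∪ τ ∈ Δ`. -/
def starSubdivFace (N : ℕ) (Δ : Finset (Finset (Fin N))) (τ : Finset (Fin N))
    (T : Finset (Option (Fin N))) : Prop :=
  (∃ σ ∈ Δ, ¬ τ ⊆ σ ∧ T = σ.image some) ∨
  (∃ σ ∈ Δ, ¬ τ ⊆ σ ∧ σ ∪ τ ∈ Δ ∧ T = insert none (σ.image some))

namespace Polynomial

variable {A : Type*} [CommRing A]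

/-- For `I ≤ K`: the polynomials with constant coefficient in `I` and all other coefficients
in `K`. -/
noncomputable def coeffwiseIdeal (I K : Ideal A) : Ideal A[X] :=
  I.map C ⊔ Ideal.span {X} * K.map C

variable {I K : Ideal A}

lemma coeff_zero_mem_of_mem_coeffwiseIdeal {q : A[X]} (hq : q ∈ coeffwiseIdeal I K) :
    q.coeff 0 ∈ I := by
  obtain ⟨a, ha, b, hb, rfl⟩ := Submodule.mem_sup.mp hq
  obtain ⟨z, -, rfl⟩ := Ideal.mem_span_singleton_mul.mp hb
  simpa using Ideal.mem_map_C_iff.mp ha 0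

lemma coeffwiseIdeal_le_map_C (hIK : I ≤ K) : coeffwiseIdeal I K ≤ K.map C :=
  sup_le (Ideal.map_mono hIK) Ideal.mul_le_right

lemma C_mem_coeffwiseIdeal_iff {a : A} : C a ∈ coeffwiseIdeal I K ↔ a ∈ I :=
  ⟨fun h => by simpa using coeff_zero_mem_of_mem_coeffwiseIdeal h,
    fun h => Ideal.mem_sup_left (Ideal.mem_map_of_mem C h)⟩

lemma X_mul_mem_coeffwiseIdeal {q : A[X]} (hq : q ∈ K.map C) : X * q ∈ coeffwiseIdeal I K :=
  Ideal.mem_sup_right (Ideal.mul_mem_mul (Ideal.mem_span_singleton_self X) hq)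

lemma C_coeff_mul_X_pow_mem_coeffwiseIdeal (hIK : I ≤ K) {q : A[X]}
    (hq : q ∈ coeffwiseIdeal I K) (k : ℕ) : C (q.coeff k) * X ^ k ∈ coeffwiseIdeal I K := by
  rcases k with _ | k
  · simpa using C_mem_coeffwiseIdeal_iff.mpr (coeff_zero_mem_of_mem_coeffwiseIdeal hq)
  · rw [pow_succ, ← mul_assoc, mul_comm]
    exact X_mul_mem_coeffwiseIdeal (Ideal.mul_mem_right _ _
      (Ideal.mem_map_of_mem C (Ideal.mem_map_C_iff.mp (coeffwiseIdeal_le_map_C hIK hq) _)))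

lemma mul_mem_coeffwiseIdeal_of_mem_map_C {G h : A[X]} (hGK : ∀ a ∈ K, G.coeff 0 * a ∈ I)
    (hh : h ∈ K.map C) : h * G ∈ coeffwiseIdeal I K := by
  rw [← X_mul_divX_add G, mul_add, mul_left_comm]
  refine add_mem (X_mul_mem_coeffwiseIdeal (Ideal.mul_mem_right _ _ hh))
    (Ideal.mem_sup_left (Ideal.mem_map_C_iff.mpr fun n => ?_))
  rw [coeff_mul_C, mul_comm]
  exact hGK _ (Ideal.mem_map_C_iff.mp hh n)

theorem mem_coeffwiseIdeal_of_mem_sup_of_degree_lt (hIK : I ≤ K) {G : A[X]} (hG : G.Monic)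
    (hGK : ∀ a ∈ K, G.coeff 0 * a ∈ I) {q : A[X]}
    (hq : q ∈ coeffwiseIdeal I K ⊔ Ideal.span {G}) (hdeg : q.degree < G.degree) :
    q ∈ coeffwiseIdeal I K := by
  obtain ⟨m, hm, g, hg, rfl⟩ := Submodule.mem_sup.mp hq
  obtain ⟨h, rfl⟩ := Ideal.mem_span_singleton'.mp hg
  refine add_mem hm (mul_mem_coeffwiseIdeal_of_mem_map_C hGK ?_)
  rw [← Ideal.mk_ker (I := K), ← ker_mapRingHom, RingHom.mem_ker, coe_mapRingHom]
  rcases subsingleton_or_nontrivial (A ⧸ K) with _ | _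
  · exact Subsingleton.elim _ _
  have hm0 : m.map (Ideal.Quotient.mk K) = 0 := by
    rw [← coe_mapRingHom, ← RingHom.mem_ker, ker_mapRingHom, Ideal.mk_ker]
    exact coeffwiseIdeal_le_map_C hIK hm
  -- modulo `K` the monic `G` divides `m + h * G`, which has smaller degree
  have hq0 : (m + h * G).map (Ideal.Quotient.mk K) = 0 := by
    by_contra hne
    refine (hG.map _).not_dvd_of_degree_lt hne ?_
      ⟨h.map _, by rw [Polynomial.map_add, hm0, zero_add, Polynomial.map_mul, mul_comm]⟩
    exact (degree_map_le.trans_lt hdeg).trans_eq (hG.degree_map _).symm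
  rwa [Polynomial.map_add, hm0, zero_add, Polynomial.map_mul,
    (hG.map _).mul_left_eq_zero_iff] at hq0

lemma exists_sub_sum_C_mul_X_pow_mem_span [Nontrivial A] {G : A[X]} (hG : G.Monic) {n : ℕ}
    (hGn : G.degree = n) (q : A[X]) :
    ∃ p : Fin n → A, q - ∑ k : Fin n, C (p k) * X ^ (k : ℕ) ∈ Ideal.span {G} := by
  have hr : q %ₘ G ∈ degreeLT A n := mem_degreeLT.mpr (hGn ▸ degree_modByMonic_lt q hG)
  refine ⟨fun k => (q %ₘ G).coeff k, ?_⟩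
  have hsum := congrArg Subtype.val ((degreeLT.basis A n).sum_repr ⟨_, hr⟩)
  simp only [degreeLT.basis_repr, degreeLT.basis_val, AddSubmonoidClass.coe_finsetSum,
    SetLike.val_smul, smul_eq_C_mul] at hsum
  rw [hsum, Ideal.mem_span_singleton']
  exact ⟨q /ₘ G, by rw [modByMonic_eq_sub_mul_div q G]; ring⟩

lemma coeffwiseIdeal_span_le {s t : Set A} {L : Ideal A[X]} (hs : ∀ a ∈ s, C a ∈ L)
    (ht : ∀ a ∈ t, X * C a ∈ L) : coeffwiseIdeal (Ideal.span s) (Ideal.span t) ≤ L := by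
  rw [coeffwiseIdeal, Ideal.map_span, Ideal.map_span, Ideal.span_mul_span', sup_le_iff,
    Ideal.span_le, Ideal.span_le]
  refine ⟨?_, ?_⟩
  · rintro _ ⟨a, ha, rfl⟩
    exact hs a ha
  · rintro _ ⟨_, rfl, _, ⟨a, ha, rfl⟩, rfl⟩
    exact ht a ha

end Polynomial

lemma iSupIndep_of_sum_eq_zero {ι R M : Type*} [Fintype ι] [Ring R] [AddCommGroup M]
    [Module R M] {p : ι → Submodule R M}
    (h : ∀ v : ι → M, (∀ i, v i ∈ p i) → ∑ i, v i = 0 → ∀ i, v i = 0) : iSupIndep p := by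
  classical
  rw [iSupIndep_iff_finsetSum_eq_zero_imp_eq_zero]
  intro s v hv hsum i hi
  have hv' : ∀ j, (if j ∈ s then v j else 0) ∈ p j := fun j => by
    split_ifs with hj
    exacts [hv j hj, zero_mem _]
  simpa [hi] using h _ hv' (by rw [Finset.sum_ite_mem, Finset.univ_inter, hsum]) i

lemma srIdealOf_mono {V : Type*} {isFace isFace' : Finset V → Prop}
    (h : ∀ T, isFace' T → isFace T) : srIdealOf V isFace ≤ srIdealOf V isFace' :=
  Ideal.span_mono fun _ ⟨T, hT, hp⟩ => ⟨T, fun h' => hT (h T h'), hp⟩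

lemma Finset.image_some_ne_insert_none {α : Type*} [DecidableEq α] (s t : Finset α) :
    s.image some ≠ insert none (t.image some) := by
  intro h
  have := Finset.mem_insert_self none (t.image some)
  rw [← h] at this
  simp at this

lemma Finset.insert_none_image_some_inj {α : Type*} [DecidableEq α] {s t : Finset α} :
    insert none (s.image some) = insert none (t.image some) ↔ s = t := by
  refine ⟨fun h => ?_, fun h => h ▸ rfl⟩
  have := congrArg (Finset.erase · none) h
  simpa [Finset.erase_insert, Finset.image_inj (Option.some_injective α)] using this

lemma prod_X_mem_srIdealOf {V : Type*} {isFace : Finset V → Prop} {S : Finset V}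
    (h : ¬ isFace S) : ∏ i ∈ S, X i ∈ srIdealOf V isFace :=
  Ideal.subset_span ⟨S, h, rfl⟩

namespace StarSubdivision

open scoped Polynomial

variable {N : ℕ} (Δ : Finset (Finset (Fin N))) (τ : Finset (Fin N))

noncomputable def pullbackPoly : MvPolynomial (Fin N) ℝ →ₐ[ℝ] MvPolynomial (Option (Fin N)) ℝ :=
  aeval fun i => if i ∈ τ then X (some i) + X none else X (some i)

noncomputable def shearEquiv :
    MvPolynomial (Option (Fin N)) ℝ ≃ₐ[ℝ] (MvPolynomial (Fin N) ℝ)[X] :=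
  AlgEquiv.ofAlgHom
    (aeval fun o => o.elim Polynomial.X fun i =>
      if i ∈ τ then Polynomial.C (X i) - Polynomial.X else Polynomial.C (X i))
    (Polynomial.aevalTower (pullbackPoly τ) (X none))
    (by ext i : 2 <;> simp [pullbackPoly]; split_ifs <;> simp [*])
    (by ext (_ | i) : 1 <;> simp [pullbackPoly]; split_ifs <;> simp [*])

@[simp]
lemma shearEquiv_X_none : shearEquiv τ (X none) = Polynomial.X := by
  simp [shearEquiv]

lemma shearEquiv_X_some (i : Fin N) :
    shearEquiv τ (X (some i)) =
      if i ∈ τ then Polynomial.C (X i) - Polynomial.X else Polynomial.C (X i) := by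
  simp [shearEquiv]

@[simp]
lemma shearEquiv_symm_C (p : MvPolynomial (Fin N) ℝ) :
    (shearEquiv τ).symm (Polynomial.C p) = pullbackPoly τ p := by
  simp [shearEquiv]

@[simp]
lemma shearEquiv_pullbackPoly (p : MvPolynomial (Fin N) ℝ) :
    shearEquiv τ (pullbackPoly τ p) = Polynomial.C p := by
  rw [← shearEquiv_symm_C, AlgEquiv.apply_symm_apply]

lemma shearEquiv_prod_X_some (S : Finset (Fin N)) :
    shearEquiv τ (∏ i ∈ S, X (some i)) =
      Polynomial.C (∏ i ∈ S \ τ, X i) * ∏ i ∈ S ∩ τ, (Polynomial.C (X i) - Polynomial.X) := by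
  simp only [map_prod, shearEquiv_X_some]
  rw [Finset.prod_ite, Finset.filter_mem_eq_inter, Finset.filter_notMem_eq_sdiff, mul_comm]

noncomputable def tauPoly : (MvPolynomial (Fin N) ℝ)[X] :=
  ∏ i ∈ τ, (Polynomial.X - Polynomial.C (X i))

lemma tauPoly_monic : (tauPoly τ).Monic :=
  Polynomial.monic_prod_of_monic _ _ fun _ _ => Polynomial.monic_X_sub_C _

lemma degree_tauPoly : (tauPoly τ).degree = τ.card := by
  rw [Polynomial.degree_eq_natDegree (tauPoly_monic τ).ne_zero, tauPoly,
    Polynomial.natDegree_finsetProd_X_sub_C_eq_card]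

lemma prod_C_sub_X (T : Finset (Fin N)) :
    ∏ i ∈ T, (Polynomial.C (X i) - Polynomial.X : (MvPolynomial (Fin N) ℝ)[X]) =
      (-1) ^ T.card * ∏ i ∈ T, (Polynomial.X - Polynomial.C (X i)) := by
  rw [← Finset.prod_neg (s := T)
    fun i => (Polynomial.X - Polynomial.C (X i) : (MvPolynomial (Fin N) ℝ)[X])]
  simp only [neg_sub]

lemma shearEquiv_prod_X_some_self :
    shearEquiv τ (∏ i ∈ τ, X (some i)) = (-1) ^ τ.card * tauPoly τ := by
  rw [shearEquiv_prod_X_some, Finset.sdiff_self, Finset.inter_self, prod_C_sub_X]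
  simp [tauPoly]

lemma tauPoly_dvd_shearEquiv_prod_X_some {S : Finset (Fin N)} (h : τ ⊆ S) :
    tauPoly τ ∣ shearEquiv τ (∏ i ∈ S, X (some i)) := by
  rw [shearEquiv_prod_X_some, Finset.inter_eq_right.mpr h, prod_C_sub_X]
  exact ⟨(-1) ^ τ.card * Polynomial.C (∏ i ∈ S \ τ, X i), by rw [tauPoly]; ring⟩

lemma coeff_zero_tauPoly : (tauPoly τ).coeff 0 = (-1) ^ τ.card * ∏ i ∈ τ, X i := by
  simp [tauPoly, Polynomial.coeff_zero_eq_eval_zero, Polynomial.eval_prod, Finset.prod_neg]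

lemma X_mul_C_dvd_shearEquiv_prod_X_some_sub (S : Finset (Fin N)) :
    Polynomial.X * Polynomial.C (∏ i ∈ S \ τ, X i) ∣
      shearEquiv τ (∏ i ∈ S, X (some i)) - Polynomial.C (∏ i ∈ S, X i) := by
  have hX : Polynomial.X ∣ ∏ i ∈ S ∩ τ, (Polynomial.C (X i) - Polynomial.X) -
      Polynomial.C (∏ i ∈ S ∩ τ, X i : MvPolynomial (Fin N) ℝ) := by
    simp [Polynomial.X_dvd_iff, Polynomial.coeff_zero_eq_eval_zero, Polynomial.eval_prod]
  rw [shearEquiv_prod_X_some, ← Finset.prod_inter_mul_prod_sdiff S τ, map_mul,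
    mul_comm (Polynomial.C (∏ i ∈ S ∩ τ, X i)), ← mul_sub, mul_comm Polynomial.X]
  exact mul_dvd_mul_left _ hX

lemma shearEquiv_X_none_mul_prod_X_some_sdiff (S : Finset (Fin N)) :
    shearEquiv τ (X none * ∏ i ∈ S \ τ, X (some i)) =
      Polynomial.X * Polynomial.C (∏ i ∈ S \ τ, X i) := by
  rw [map_mul, shearEquiv_prod_X_some, shearEquiv_X_none, sdiff_idem, Finset.sdiff_inter_self,
    Finset.prod_empty, mul_one]

lemma starSubdivFace_image_some_iff {S : Finset (Fin N)} :
    starSubdivFace N Δ τ (S.image some) ↔ S ∈ Δ ∧ ¬ τ ⊆ S := by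
  simp [starSubdivFace, Finset.image_inj (Option.some_injective _),
    Finset.image_some_ne_insert_none]

lemma starSubdivFace_insert_none_iff {S : Finset (Fin N)} :
    starSubdivFace N Δ τ (insert none (S.image some)) ↔ S ∈ Δ ∧ ¬ τ ⊆ S ∧ S ∪ τ ∈ Δ := by
  simp [starSubdivFace, Finset.insert_none_image_some_inj,
    (Finset.image_some_ne_insert_none _ S).symm]

lemma exists_eq_image_some_or_eq_insert_none (T : Finset (Option (Fin N))) :
    ∃ S : Finset (Fin N), T = S.image some ∨ T = insert none (S.image some) := by
  refine ⟨T.eraseNone, ?_⟩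
  rw [Finset.image_some_eraseNone]
  by_cases h : none ∈ T
  · exact Or.inr (Finset.insert_erase h).symm
  · exact Or.inl (Finset.erase_eq_of_notMem h).symm

lemma prod_X_some_mem_srIdeal {S : Finset (Fin N)}
    (h : ¬ starSubdivFace N Δ τ (S.image some)) :
    ∏ i ∈ S, X (some i) ∈ srIdealOf (Option (Fin N)) (starSubdivFace N Δ τ) := by
  simpa [Finset.prod_image] using prod_X_mem_srIdealOf h

lemma X_none_mul_prod_X_some_mem_srIdeal {S : Finset (Fin N)}
    (h : ¬ starSubdivFace N Δ τ (insert none (S.image some))) :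
    X none * ∏ i ∈ S, X (some i) ∈ srIdealOf (Option (Fin N)) (starSubdivFace N Δ τ) := by
  simpa [Finset.prod_image] using prod_X_mem_srIdealOf h

/-- `srIdealOf (Fin N) (· ∪ τ ∈ Δ)` is the Stanley–Reisner ideal of the closed star of `τ`. -/
noncomputable def shearedIdeal : Ideal (MvPolynomial (Fin N) ℝ)[X] :=
  Polynomial.coeffwiseIdeal (srIdealOf (Fin N) (· ∈ Δ)) (srIdealOf (Fin N) (· ∪ τ ∈ Δ)) ⊔
    Ideal.span {tauPoly τ}

lemma C_mem_shearedIdeal {p : MvPolynomial (Fin N) ℝ} (hp : p ∈ srIdealOf (Fin N) (· ∈ Δ)) :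
    Polynomial.C p ∈ shearedIdeal Δ τ :=
  Ideal.mem_sup_left (Polynomial.C_mem_coeffwiseIdeal_iff.mpr hp)

lemma X_mul_C_mem_shearedIdeal {p : MvPolynomial (Fin N) ℝ}
    (hp : p ∈ srIdealOf (Fin N) (· ∪ τ ∈ Δ)) :
    Polynomial.X * Polynomial.C p ∈ shearedIdeal Δ τ :=
  Ideal.mem_sup_left (Polynomial.X_mul_mem_coeffwiseIdeal (Ideal.mem_map_of_mem _ hp))

lemma mem_shearedIdeal_of_tauPoly_dvd {q : (MvPolynomial (Fin N) ℝ)[X]} (h : tauPoly τ ∣ q) :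
    q ∈ shearedIdeal Δ τ :=
  Ideal.mem_sup_right (Ideal.mem_span_singleton.mpr h)

lemma shearEquiv_prod_X_some_sub_mem_shearedIdeal {S : Finset (Fin N)} (hS : S ∪ τ ∉ Δ) :
    shearEquiv τ (∏ i ∈ S, X (some i)) - Polynomial.C (∏ i ∈ S, X i) ∈ shearedIdeal Δ τ :=
  Ideal.mem_of_dvd _ (X_mul_C_dvd_shearEquiv_prod_X_some_sub τ S) (X_mul_C_mem_shearedIdeal Δ τ
    (prod_X_mem_srIdealOf (by rwa [Finset.sdiff_union_self_eq_union])))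

variable {Δ}

theorem srIdeal_le_comap_shearEquiv (hΔ : ∀ σ ∈ Δ, ∀ τ' ⊆ σ, τ' ∈ Δ) :
    srIdealOf (Option (Fin N)) (starSubdivFace N Δ τ) ≤
      (shearedIdeal Δ τ).comap (shearEquiv τ) := by
  rw [srIdealOf, Ideal.span_le]
  rintro _ ⟨T, hT, rfl⟩
  rw [SetLike.mem_coe, Ideal.mem_comap]
  obtain ⟨S, rfl | rfl⟩ := exists_eq_image_some_or_eq_insert_none T
  · rw [starSubdivFace_image_some_iff, not_and_not_right] at hT
    rw [Finset.prod_image (Option.some_injective _).injOn]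
    by_cases hτS : τ ⊆ S
    · exact mem_shearedIdeal_of_tauPoly_dvd Δ τ (tauPoly_dvd_shearEquiv_prod_X_some τ hτS)
    · have hS : S ∉ Δ := mt hT hτS
      rw [← sub_add_cancel (shearEquiv τ _) (Polynomial.C (∏ i ∈ S, X i))]
      exact add_mem (shearEquiv_prod_X_some_sub_mem_shearedIdeal Δ τ
          fun h => hS (hΔ _ h _ Finset.subset_union_left))
        (C_mem_shearedIdeal Δ τ (prod_X_mem_srIdealOf hS))
  · rw [starSubdivFace_insert_none_iff] at hT
    rw [Finset.prod_insert (by simp), Finset.prod_image (Option.some_injective _).injOn, map_mul,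
      shearEquiv_X_none]
    by_cases hτS : τ ⊆ S
    · exact mem_shearedIdeal_of_tauPoly_dvd Δ τ
        (dvd_mul_of_dvd_right (tauPoly_dvd_shearEquiv_prod_X_some τ hτS) _)
    · have hS : S ∪ τ ∉ Δ := fun h => hT ⟨hΔ _ h _ Finset.subset_union_left, hτS, h⟩
      rw [← sub_add_cancel (shearEquiv τ _) (Polynomial.C (∏ i ∈ S, X i)), mul_add]
      exact add_mem (Ideal.mul_mem_left _ _ (shearEquiv_prod_X_some_sub_mem_shearedIdeal Δ τ hS))
        (X_mul_C_mem_shearedIdeal Δ τ (prod_X_mem_srIdealOf hS))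

theorem shearedIdeal_le_comap_shearEquiv_symm (hΔ : ∀ σ ∈ Δ, ∀ τ' ⊆ σ, τ' ∈ Δ) :
    shearedIdeal Δ τ ≤
      (srIdealOf (Option (Fin N)) (starSubdivFace N Δ τ)).comap (shearEquiv τ).symm := by
  set L := (srIdealOf (Option (Fin N)) (starSubdivFace N Δ τ)).comap (shearEquiv τ).symm
  have hL : ∀ {a}, a ∈ srIdealOf (Option (Fin N)) (starSubdivFace N Δ τ) → shearEquiv τ a ∈ L :=
    fun ha => by simpa [L] using ha
  have hsub : ∀ S : Finset (Fin N), S ∪ τ ∉ Δ →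
      shearEquiv τ (∏ i ∈ S, X (some i)) - Polynomial.C (∏ i ∈ S, X i) ∈ L := by
    intro S hS
    refine Ideal.mem_of_dvd _ (X_mul_C_dvd_shearEquiv_prod_X_some_sub τ S) ?_
    rw [← shearEquiv_X_none_mul_prod_X_some_sdiff]
    refine hL (X_none_mul_prod_X_some_mem_srIdeal Δ τ ?_)
    rw [starSubdivFace_insert_none_iff, Finset.sdiff_union_self_eq_union]
    exact fun h => hS h.2.2
  refine sup_le (Polynomial.coeffwiseIdeal_span_le ?_ ?_) ?_
  · rintro _ ⟨S, hS, rfl⟩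
    rw [← sub_sub_cancel (shearEquiv τ (∏ i ∈ S, X (some i))) (Polynomial.C _)]
    refine sub_mem (hL (prod_X_some_mem_srIdeal Δ τ ?_))
      (hsub S fun h => hS (hΔ _ h _ Finset.subset_union_left))
    rw [starSubdivFace_image_some_iff]
    exact fun h => hS h.1
  · rintro _ ⟨S, hS, rfl⟩
    rw [← sub_sub_cancel (shearEquiv τ (∏ i ∈ S, X (some i))) (Polynomial.C _), mul_sub,
      ← shearEquiv_X_none, ← map_mul]
    refine sub_mem (hL (X_none_mul_prod_X_some_mem_srIdeal Δ τ ?_))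
      (Ideal.mul_mem_left _ _ (hsub S hS))
    rw [starSubdivFace_insert_none_iff]
    exact fun h => hS h.2.2
  · rw [Ideal.span_singleton_le_iff_mem,
      ← Ideal.unit_mul_mem_iff_mem _ (isUnit_neg_one.pow τ.card), ← shearEquiv_prod_X_some_self]
    refine hL (prod_X_some_mem_srIdeal Δ τ ?_)
    rw [starSubdivFace_image_some_iff]
    exact fun h => h.2 subset_rfl

theorem mem_srIdeal_iff (hΔ : ∀ σ ∈ Δ, ∀ τ' ⊆ σ, τ' ∈ Δ)
    {q : MvPolynomial (Option (Fin N)) ℝ} :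
    q ∈ srIdealOf (Option (Fin N)) (starSubdivFace N Δ τ) ↔ shearEquiv τ q ∈ shearedIdeal Δ τ :=
  ⟨fun h => srIdeal_le_comap_shearEquiv τ hΔ h,
    fun h => by simpa using shearedIdeal_le_comap_shearEquiv_symm τ hΔ h⟩

lemma srIdeal_le_srIdeal_star (hΔ : ∀ σ ∈ Δ, ∀ τ' ⊆ σ, τ' ∈ Δ) :
    srIdealOf (Fin N) (· ∈ Δ) ≤ srIdealOf (Fin N) (· ∪ τ ∈ Δ) :=
  srIdealOf_mono fun S h => hΔ _ h S Finset.subset_union_left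

lemma coeff_zero_tauPoly_mul_mem {a : MvPolynomial (Fin N) ℝ}
    (ha : a ∈ srIdealOf (Fin N) (· ∪ τ ∈ Δ)) :
    (tauPoly τ).coeff 0 * a ∈ srIdealOf (Fin N) (· ∈ Δ) := by
  rw [coeff_zero_tauPoly, mul_assoc]
  refine Ideal.mul_mem_left _ _ ?_
  have : srIdealOf (Fin N) (· ∪ τ ∈ Δ) ≤ (srIdealOf (Fin N) (· ∈ Δ)).colon {∏ i ∈ τ, X i} := by
    rw [srIdealOf, Ideal.span_le]
    rintro _ ⟨S, hS, rfl⟩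
    rw [SetLike.mem_coe, Submodule.mem_colon_singleton, smul_eq_mul, ← Finset.prod_union_inter]
    exact Ideal.mul_mem_right _ _ (prod_X_mem_srIdealOf hS)
  rw [mul_comm, ← smul_eq_mul, ← Submodule.mem_colon_singleton]
  exact this ha

lemma mem_coeffwiseIdeal_of_mem_shearedIdeal (hΔ : ∀ σ ∈ Δ, ∀ τ' ⊆ σ, τ' ∈ Δ)
    {q : (MvPolynomial (Fin N) ℝ)[X]} (hq : q ∈ shearedIdeal Δ τ) (hdeg : q.degree < τ.card) :
    q ∈ Polynomial.coeffwiseIdeal (srIdealOf (Fin N) (· ∈ Δ)) (srIdealOf (Fin N) (· ∪ τ ∈ Δ)) :=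
  Polynomial.mem_coeffwiseIdeal_of_mem_sup_of_degree_lt (srIdeal_le_srIdeal_star τ hΔ)
    (tauPoly_monic τ) (fun _ ha => coeff_zero_tauPoly_mul_mem τ ha) hq
    (by rwa [degree_tauPoly])

variable {τ} in
theorem pullbackPoly_mem_srIdeal_iff (hΔ : ∀ σ ∈ Δ, ∀ τ' ⊆ σ, τ' ∈ Δ) (hτ : τ.Nonempty)
    {p : MvPolynomial (Fin N) ℝ} :
    pullbackPoly τ p ∈ srIdealOf (Option (Fin N)) (starSubdivFace N Δ τ) ↔
      p ∈ srIdealOf (Fin N) (· ∈ Δ) := by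
  rw [mem_srIdeal_iff τ hΔ, shearEquiv_pullbackPoly]
  refine ⟨fun h => Polynomial.C_mem_coeffwiseIdeal_iff.mp
    (mem_coeffwiseIdeal_of_mem_shearedIdeal τ hΔ h ?_), C_mem_shearedIdeal Δ τ⟩
  exact Polynomial.degree_C_le.trans_lt (by exact_mod_cast hτ.card_pos)

@[simp]
lemma shearEquiv_X_none_pow_mul_pullbackPoly (k : ℕ) (p : MvPolynomial (Fin N) ℝ) :
    shearEquiv τ (X none ^ k * pullbackPoly τ p) = Polynomial.C p * Polynomial.X ^ k := by
  rw [map_mul, map_pow, shearEquiv_X_none, shearEquiv_pullbackPoly, mul_comm]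

theorem exists_sub_sum_mem_srIdeal (hΔ : ∀ σ ∈ Δ, ∀ τ' ⊆ σ, τ' ∈ Δ)
    (q : MvPolynomial (Option (Fin N)) ℝ) :
    ∃ p : Fin τ.card → MvPolynomial (Fin N) ℝ,
      q - ∑ k : Fin τ.card, X none ^ (k : ℕ) * pullbackPoly τ (p k) ∈
        srIdealOf (Option (Fin N)) (starSubdivFace N Δ τ) := by
  obtain ⟨p, hp⟩ := Polynomial.exists_sub_sum_C_mul_X_pow_mem_span (tauPoly_monic τ)
    (degree_tauPoly τ) (shearEquiv τ q)
  refine ⟨p, (mem_srIdeal_iff τ hΔ).mpr ?_⟩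
  simpa using mem_shearedIdeal_of_tauPoly_dvd Δ τ (Ideal.mem_span_singleton.mp hp)

theorem pow_mul_pullbackPoly_mem_of_sum_mem (hΔ : ∀ σ ∈ Δ, ∀ τ' ⊆ σ, τ' ∈ Δ)
    (p : Fin τ.card → MvPolynomial (Fin N) ℝ)
    (h : ∑ k : Fin τ.card, X none ^ (k : ℕ) * pullbackPoly τ (p k) ∈
      srIdealOf (Option (Fin N)) (starSubdivFace N Δ τ)) (k : Fin τ.card) :
    X none ^ (k : ℕ) * pullbackPoly τ (p k) ∈
      srIdealOf (Option (Fin N)) (starSubdivFace N Δ τ) := by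
  rw [mem_srIdeal_iff τ hΔ] at h ⊢
  simp only [map_sum, shearEquiv_X_none_pow_mul_pullbackPoly] at h ⊢
  have := Polynomial.C_coeff_mul_X_pow_mem_coeffwiseIdeal (srIdeal_le_srIdeal_star τ hΔ)
    (mem_coeffwiseIdeal_of_mem_shearedIdeal τ hΔ h (Polynomial.degree_sum_fin_lt p)) k
  simp only [Polynomial.finsetSum_coeff, Polynomial.coeff_C_mul, Polynomial.coeff_X_pow,
    Fin.val_inj, mul_ite, mul_one, mul_zero, Finset.sum_ite_eq, Finset.mem_univ, if_true] at this
  exact Ideal.mem_sup_left this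

section Quotient

variable {τ}
variable (π : (MvPolynomial (Fin N) ℝ ⧸ srIdealOf (Fin N) (· ∈ Δ)) →ₐ[ℝ]
  (MvPolynomial (Option (Fin N)) ℝ ⧸ srIdealOf (Option (Fin N)) (starSubdivFace N Δ τ)))

noncomputable def powMulRange (k : ℕ) :
    Submodule ℝ
      (MvPolynomial (Option (Fin N)) ℝ ⧸ srIdealOf (Option (Fin N)) (starSubdivFace N Δ τ)) :=
  (LinearMap.range π.toLinearMap).map
    (LinearMap.mulLeft ℝ (Ideal.Quotient.mk _ (X (none : Option (Fin N))) ^ k))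

variable {π}

lemma mem_powMulRange_iff
    (hπ : ∀ p, π (Ideal.Quotient.mk _ p) = Ideal.Quotient.mk _ (pullbackPoly τ p)) {k : ℕ} {x} :
    x ∈ powMulRange π k ↔ ∃ p, x = Ideal.Quotient.mk _ (X none ^ k * pullbackPoly τ p) := by
  simp only [powMulRange, Submodule.mem_map, LinearMap.mem_range, LinearMap.mulLeft_apply]
  constructor
  · rintro ⟨_, ⟨a, rfl⟩, rfl⟩
    obtain ⟨p, rfl⟩ := Ideal.Quotient.mk_surjective a
    exact ⟨p, by simp [hπ]⟩
  · rintro ⟨p, rfl⟩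
    exact ⟨_, ⟨Ideal.Quotient.mk _ p, rfl⟩, by simp [hπ]⟩

theorem injective_of_apply_mk
    (hπ : ∀ p, π (Ideal.Quotient.mk _ p) = Ideal.Quotient.mk _ (pullbackPoly τ p))
    (hΔ : ∀ σ ∈ Δ, ∀ τ' ⊆ σ, τ' ∈ Δ) (hτ : τ.Nonempty) :
    Function.Injective π := by
  rw [injective_iff_map_eq_zero]
  intro a ha
  obtain ⟨p, rfl⟩ := Ideal.Quotient.mk_surjective a
  rw [hπ, Ideal.Quotient.eq_zero_iff_mem, pullbackPoly_mem_srIdeal_iff hΔ hτ] at ha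
  exact Ideal.Quotient.eq_zero_iff_mem.mpr ha

theorem iSup_powMulRange_eq_top
    (hπ : ∀ p, π (Ideal.Quotient.mk _ p) = Ideal.Quotient.mk _ (pullbackPoly τ p))
    (hΔ : ∀ σ ∈ Δ, ∀ τ' ⊆ σ, τ' ∈ Δ) :
    ⨆ k : Fin τ.card, powMulRange π k = ⊤ := by
  refine eq_top_iff.mpr fun x _ => ?_
  obtain ⟨q, rfl⟩ := Ideal.Quotient.mk_surjective x
  obtain ⟨p, hp⟩ := exists_sub_sum_mem_srIdeal τ hΔ q
  rw [← sub_add_cancel q (∑ k : Fin τ.card, X none ^ (k : ℕ) * pullbackPoly τ (p k)), map_add,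
    Ideal.Quotient.eq_zero_iff_mem.mpr hp, zero_add, map_sum]
  exact Submodule.sum_mem _ fun k _ =>
    Submodule.mem_iSup_of_mem k ((mem_powMulRange_iff hπ).mpr ⟨p k, rfl⟩)

theorem iSupIndep_powMulRange
    (hπ : ∀ p, π (Ideal.Quotient.mk _ p) = Ideal.Quotient.mk _ (pullbackPoly τ p))
    (hΔ : ∀ σ ∈ Δ, ∀ τ' ⊆ σ, τ' ∈ Δ) :
    iSupIndep fun k : Fin τ.card => powMulRange π k := by
  refine iSupIndep_of_sum_eq_zero fun v hv hsum k => ?_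
  choose p hp using fun k => (mem_powMulRange_iff hπ).mp (hv k)
  have hmem : ∑ k : Fin τ.card, X none ^ (k : ℕ) * pullbackPoly τ (p k) ∈
      srIdealOf (Option (Fin N)) (starSubdivFace N Δ τ) := by
    rw [← Ideal.Quotient.eq_zero_iff_mem, map_sum, ← hsum]
    exact Finset.sum_congr rfl fun k _ => (hp k).symm
  rw [hp k, Ideal.Quotient.eq_zero_iff_mem]
  exact pow_mul_pullbackPoly_mem_of_sum_mem τ hΔ p hmem k

end Quotient

end StarSubdivision

open StarSubdivision in
theorem stmt16_general (N : ℕ) (Δ : Finset (Finset (Fin N)))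
    (hΔ : ∀ σ ∈ Δ, ∀ τ' ⊆ σ, τ' ∈ Δ)
    (τ : Finset (Fin N)) (hj : 2 ≤ τ.card) :
    ∃ π : (MvPolynomial (Fin N) ℝ ⧸ srIdealOf (Fin N) (· ∈ Δ)) →ₐ[ℝ]
        (MvPolynomial (Option (Fin N)) ℝ ⧸
          srIdealOf (Option (Fin N)) (starSubdivFace N Δ τ)),
      (∀ p : MvPolynomial (Fin N) ℝ,
        π (Ideal.Quotient.mk (srIdealOf (Fin N) (· ∈ Δ)) p) =
          Ideal.Quotient.mk (srIdealOf (Option (Fin N)) (starSubdivFace N Δ τ))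
            (aeval (fun i : Fin N =>
              if i ∈ τ then X (some i) + X (none : Option (Fin N)) else X (some i)) p)) ∧
      Function.Injective π ∧
      (iSup (fun k : Fin τ.card =>
        Submodule.map
          (LinearMap.mulLeft ℝ
            ((Ideal.Quotient.mk (srIdealOf (Option (Fin N)) (starSubdivFace N Δ τ))
                (X (none : Option (Fin N)))) ^ (k : ℕ)))
          (LinearMap.range π.toLinearMap)) = ⊤) ∧
      iSupIndep (fun k : Fin τ.card =>
        Submodule.map
          (LinearMap.mulLeft ℝ
            ((Ideal.Quotient.mk (srIdealOf (Option (Fin N)) (starSubdivFace N Δ τ))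
                (X (none : Option (Fin N)))) ^ (k : ℕ)))
          (LinearMap.range π.toLinearMap)) := by
  have hτ : τ.Nonempty := Finset.card_pos.mp (by omega)
  let π := Ideal.Quotient.liftₐ (srIdealOf (Fin N) (· ∈ Δ))
    ((Ideal.Quotient.mkₐ ℝ _).comp (pullbackPoly τ)) fun p hp =>
      Ideal.Quotient.eq_zero_iff_mem.mpr ((pullbackPoly_mem_srIdeal_iff hΔ hτ).mpr hp)
  have hπ : ∀ p, π (Ideal.Quotient.mk _ p) = Ideal.Quotient.mk _ (pullbackPoly τ p) :=
    fun _ => rfl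
  exact ⟨π, hπ, injective_of_apply_mk hπ hΔ hτ, iSup_powMulRange_eq_top hπ hΔ,
    iSupIndep_powMulRange hπ hΔ⟩

/-- the substitution `∂_i ↦ ∂_i + ∂_0` (`i ∈ τ`), `∂_i ↦ ∂_i` (`i ∉ τ`)
induces a well-defined injective ring homomorphism `π* : 𝒜(Δ) → 𝒜(Δ̂)` of
Stanley–Reisner rings, and `𝒜(Δ̂)` is the internal direct sum of the subspaces
`∂_0^k · π*(𝒜(Δ))` for `k = 0, 1, …, j−1`, where `j = |τ| ≥ 2`. -/
theorem stmt16 (N : ℕ) (Δ : Finset (Finset (Fin N)))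
    (hΔ : ∀ σ ∈ Δ, ∀ τ' ⊆ σ, τ' ∈ Δ)
    (τ : Finset (Fin N)) (hτ : τ ∈ Δ) (hj : 2 ≤ τ.card) :
    ∃ π : (MvPolynomial (Fin N) ℝ ⧸ srIdealOf (Fin N) (· ∈ Δ)) →ₐ[ℝ]
        (MvPolynomial (Option (Fin N)) ℝ ⧸
          srIdealOf (Option (Fin N)) (starSubdivFace N Δ τ)),
      (∀ p : MvPolynomial (Fin N) ℝ,
        π (Ideal.Quotient.mk (srIdealOf (Fin N) (· ∈ Δ)) p) =
          Ideal.Quotient.mk (srIdealOf (Option (Fin N)) (starSubdivFace N Δ τ))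
            (aeval (fun i : Fin N =>
              if i ∈ τ then X (some i) + X (none : Option (Fin N)) else X (some i)) p)) ∧
      Function.Injective π ∧
      (iSup (fun k : Fin τ.card =>
        Submodule.map
          (LinearMap.mulLeft ℝ
            ((Ideal.Quotient.mk (srIdealOf (Option (Fin N)) (starSubdivFace N Δ τ))
                (X (none : Option (Fin N)))) ^ (k : ℕ)))
          (LinearMap.range π.toLinearMap)) = ⊤) ∧
      iSupIndep (fun k : Fin τ.card =>
        Submodule.map
          (LinearMap.mulLeft ℝ
            ((Ideal.Quotient.mk (srIdealOf (Option (Fin N)) (starSubdivFace N Δ τ))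
                (X (none : Option (Fin N)))) ^ (k : ℕ)))
          (LinearMap.range π.toLinearMap)) :=
  stmt16_general N Δ hΔ τ hj
end
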